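/- arXiv:1602.08663 — 6 statements merged into one kernel-verified Lean document; each statement's English description precedes it below -/
import Mathlib

section
/- Let E : ℝ×ℝ → ℝ be C², bounded together with its first and second partial derivatives, and let (x(t), v(t)) solve x'(t) = v(t), v'(t) = E(x(t), t), x(T) = x₀, v(T) = v₀ on [T−h₀, T]. Fix C₀ > 0 and suppose for each 0 < h ≤ h₀ a number Ẽ(h) satisfies |Ẽ(h) − E(x₀, T)| ≤ C₀·h². Define x⁽¹⁾ = x₀ − v₀·h, v⁽¹⁾ = v₀ − E(x₀, T−h)·h, and the second-order approximations x⁽²⁾ = x₀ − (h/2)·(v₀ + v⁽¹⁾) and v⁽²⁾ = v₀ − (h/2)·(E(x⁽¹⁾, T−h) + Ẽ(h)). Then there exists C > 0 such that for all 0 < h ≤ h₀, |x(T−h) − x⁽²⁾| ≤ C·h³ and |v(T−h) − v⁽²⁾| ≤ C·h³. -/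
/-!
Reverse time along the characteristic: for `s ∈ [0, h₀]` put `X s = x (T - s)`, `V s = v (T - s)`
and `G s = E (X s, T - s)`. Then `X' = -V`, `V' = -G`, and by the chain rule `G'` and `G''` are
the first and second derivatives of `E` applied to the tangent `(-V, -1)` of the reversed curve
and to its derivative `(G, 0)`. Since `|V| ≤ |v₀| + M h₀`, the bounds on `E` and its first two
derivatives bound `X'''` and `V'''`, so the Taylor polynomials of degree two of `X` and `V` at
`s = 0` are `O(h³)`-accurate. The scheme agrees with these polynomials up to `O(h³)`: for the
position it uses `E (x₀, T - h)` instead of `E (x₀, T)` in the `h² / 2` term, and for the velocity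
`E (x₀ - v₀ h, T - h) = E (x₀, T) + h DE(x₀, T)(-v₀, -1) + O(h²)` and `Ẽ(h) = E (x₀, T) + O(h²)`
enter with the factor `h / 2`.
-/

open Set
open scoped Nat

section Taylor

variable {F : Type*} [NormedAddCommGroup F] [NormedSpace ℝ F]

theorem norm_le_of_norm_deriv_le_pow_div_factorial {f f' : ℝ → F} {b K : ℝ} {n : ℕ}
    (hf0 : f 0 = 0) (hf : ∀ t ∈ Icc 0 b, HasDerivAt f (f' t) t)
    (hf' : ∀ t ∈ Icc 0 b, ‖f' t‖ ≤ K * t ^ n / n !) :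
    ∀ t ∈ Icc 0 b, ‖f t‖ ≤ K * t ^ (n + 1) / (n + 1)! := by
  have hB (t : ℝ) : HasDerivAt (fun t => K * t ^ (n + 1) / (n + 1)!) (K * t ^ n / n !) t := by
    refine (((hasDerivAt_pow (n + 1) t).const_mul K).div_const ((n + 1)! : ℝ)).congr_deriv ?_
    rw [Nat.factorial_succ]
    push_cast
    field_simp
  exact fun t ht => image_norm_le_of_norm_deriv_right_le_deriv_boundary
    (fun s hs => (hf s hs).continuousAt.continuousWithinAt)
    (fun s hs => (hf s (Ico_subset_Icc_self hs)).hasDerivWithinAt) (by simp [hf0]) hB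
    (fun s hs => hf' s (Ico_subset_Icc_self hs)) ht

theorem norm_sub_taylor_two_le {f f₁ f₂ f₃ : ℝ → F} {b K : ℝ}
    (hf : ∀ t ∈ Icc 0 b, HasDerivAt f (f₁ t) t)
    (hf₁ : ∀ t ∈ Icc 0 b, HasDerivAt f₁ (f₂ t) t)
    (hf₂ : ∀ t ∈ Icc 0 b, HasDerivAt f₂ (f₃ t) t)
    (hf₃ : ∀ t ∈ Icc 0 b, ‖f₃ t‖ ≤ K) (hb : 0 ≤ b) :
    ‖f b - f 0 - b • f₁ 0 - (b ^ 2 / 2) • f₂ 0‖ ≤ K * b ^ 3 / 6 := by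
  have h₂ : ∀ t ∈ Icc 0 b, ‖f₂ t - f₂ 0‖ ≤ K * t ^ 1 / 1 ! :=
    norm_le_of_norm_deriv_le_pow_div_factorial (n := 0) (sub_self _)
      (fun t ht => (hf₂ t ht).sub_const (f₂ 0)) (by simpa using hf₃)
  have h₁ : ∀ t ∈ Icc 0 b, ‖f₁ t - f₁ 0 - t • f₂ 0‖ ≤ K * t ^ 2 / 2 ! :=
    norm_le_of_norm_deriv_le_pow_div_factorial (by simp)
      (fun t ht => (((hf₁ t ht).sub_const (f₁ 0)).sub
        ((hasDerivAt_id t).smul_const (f₂ 0))).congr_deriv (by simp)) h₂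
  have h₀ : ∀ t ∈ Icc 0 b,
      ‖f t - f 0 - t • f₁ 0 - (t ^ 2 / 2) • f₂ 0‖ ≤ K * t ^ 3 / 3 ! :=
    norm_le_of_norm_deriv_le_pow_div_factorial (by simp)
      (fun t ht => ((((hf t ht).sub_const (f 0)).sub ((hasDerivAt_id t).smul_const (f₁ 0))).sub
        (((hasDerivAt_pow 2 t).div_const 2).smul_const (f₂ 0))).congr_deriv (by simp)) h₁
  simpa [Nat.factorial] using h₀ b ⟨hb, le_rfl⟩

end Taylor

section SecondDerivative

variable {F G : Type*} [NormedAddCommGroup F] [NormedSpace ℝ F]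
  [NormedAddCommGroup G] [NormedSpace ℝ G]

theorem norm_fderiv_fderiv_eq_norm_iteratedFDeriv_two (f : F → G) (p : F) :
    ‖fderiv ℝ (fderiv ℝ f) p‖ = ‖iteratedFDeriv ℝ 2 f p‖ := by
  rw [← norm_iteratedFDeriv_one, norm_iteratedFDeriv_fderiv]

theorem norm_sub_sub_fderiv_le {f : F → G} {M : ℝ} (hf : ContDiff ℝ 2 f)
    (hM : ∀ p, ‖fderiv ℝ (fderiv ℝ f) p‖ ≤ M) (p u : F) :
    ‖f (p + u) - f p - fderiv ℝ f p u‖ ≤ M * ‖u‖ ^ 2 := by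
  have hf' : Differentiable ℝ (fderiv ℝ f) :=
    (hf.fderiv_right (m := 1) (by norm_num)).differentiable (by norm_num)
  have hM0 : 0 ≤ M := (norm_nonneg (fderiv ℝ (fderiv ℝ f) p)).trans (hM p)
  have hlip (z : F) : ‖fderiv ℝ f z - fderiv ℝ f p‖ ≤ M * ‖z - p‖ :=
    convex_univ.norm_image_sub_le_of_norm_fderiv_le (fun z _ => hf' z) (fun z _ => hM z)
      (mem_univ p) (mem_univ z)
  have := (convex_closedBall p ‖u‖).norm_image_sub_le_of_norm_fderiv_le'
    (fun z _ => hf.differentiable (by norm_num) z)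
    (fun z hz => (hlip z).trans (mul_le_mul_of_nonneg_left (mem_closedBall_iff_norm.mp hz) hM0))
    (Metric.mem_closedBall_self (norm_nonneg u)) (y := p + u) (by simp)
  simpa [sq, mul_assoc] using this

theorem hasDerivAt_fderiv_comp_apply {f : F → G} {γ w : ℝ → F} {a : F} {s : ℝ}
    (hf : DifferentiableAt ℝ (fderiv ℝ f) (γ s)) (hγ : HasDerivAt γ (w s) s)
    (hw : HasDerivAt w a s) :
    HasDerivAt (fun t => fderiv ℝ f (γ t) (w t))
      (fderiv ℝ (fderiv ℝ f) (γ s) (w s) (w s) + fderiv ℝ f (γ s) a) s :=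
  (hf.hasFDerivAt.comp_hasDerivAt s hγ).clm_apply hw

theorem norm_fderiv_fderiv_apply_add_le {f : F → G} {p w a : F} {M W A : ℝ}
    (hf₁ : ‖fderiv ℝ f p‖ ≤ M) (hf₂ : ‖fderiv ℝ (fderiv ℝ f) p‖ ≤ M) (hw : ‖w‖ ≤ W)
    (ha : ‖a‖ ≤ A) :
    ‖fderiv ℝ (fderiv ℝ f) p w w + fderiv ℝ f p a‖ ≤ M * W ^ 2 + M * A := by
  have hM0 : 0 ≤ M := (norm_nonneg _).trans hf₁
  have hW0 : 0 ≤ W := (norm_nonneg _).trans hw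
  calc ‖fderiv ℝ (fderiv ℝ f) p w w + fderiv ℝ f p a‖
      ≤ ‖fderiv ℝ (fderiv ℝ f) p‖ * ‖w‖ * ‖w‖ + ‖fderiv ℝ f p‖ * ‖a‖ :=
        (norm_add_le _ _).trans (add_le_add (ContinuousLinearMap.le_opNorm₂ _ _ _)
          (ContinuousLinearMap.le_opNorm _ _))
    _ ≤ M * W * W + M * A := by gcongr
    _ = M * W ^ 2 + M * A := by ring

end SecondDerivative

section BackwardCharacteristic

variable {F : Type*} [NormedAddCommGroup F] [NormedSpace ℝ F]
  {E : ℝ × ℝ → ℝ} {x v : ℝ → ℝ} {T h₀ M W : ℝ}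

theorem hasDerivAt_comp_const_sub_of_mem_Icc {f f' : ℝ → F}
    (hf : ∀ t ∈ Icc (T - h₀) T, HasDerivAt f (f' t) t) {s : ℝ} (hs : s ∈ Icc 0 h₀) :
    HasDerivAt (fun s => f (T - s)) (-f' (T - s)) s :=
  (hf (T - s) ⟨by linarith [hs.2], by linarith [hs.1]⟩).comp_const_sub T s

theorem hasDerivAt_backward_curve (hx : ∀ t ∈ Icc (T - h₀) T, HasDerivAt x (v t) t)
    {s : ℝ} (hs : s ∈ Icc 0 h₀) :
    HasDerivAt (fun s => (x (T - s), T - s)) ((-v (T - s), -1) : ℝ × ℝ) s :=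
  (hasDerivAt_comp_const_sub_of_mem_Icc hx hs).prodMk ((hasDerivAt_id s).const_sub T)

theorem hasDerivAt_backward_tangent (hv : ∀ t ∈ Icc (T - h₀) T, HasDerivAt v (E (x t, t)) t)
    {s : ℝ} (hs : s ∈ Icc 0 h₀) :
    HasDerivAt (fun s => ((-v (T - s), -1) : ℝ × ℝ)) (E (x (T - s), T - s), 0) s :=
  ((hasDerivAt_comp_const_sub_of_mem_Icc hv hs).neg.prodMk
    (hasDerivAt_const s (-1 : ℝ))).congr_deriv (by simp)

theorem norm_backward_tangent_le (hv : ∀ t ∈ Icc (T - h₀) T, HasDerivAt v (E (x t, t)) t)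
    (hE₀ : ∀ p, |E p| ≤ M) :
    ∀ s ∈ Icc 0 h₀, ‖((-v (T - s), -1) : ℝ × ℝ)‖ ≤ max (|v T| + M * h₀) 1 := by
  intro s hs
  have hM0 : 0 ≤ M := (abs_nonneg _).trans (hE₀ 0)
  have hdrift : ‖v (T - s) - v (T - 0)‖ ≤ M * (s - 0) :=
    norm_image_sub_le_of_norm_deriv_le_segment' (f := fun s => v (T - s))
      (fun t ht => (hasDerivAt_comp_const_sub_of_mem_Icc hv ht).hasDerivWithinAt)
      (fun t _ => by simpa using hE₀ _) s hs
  simp only [sub_zero, Real.norm_eq_abs] at hdrift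
  simp only [Prod.norm_mk, norm_neg, Real.norm_eq_abs, abs_one]
  refine max_le_max_right 1 ?_
  nlinarith [abs_sub_abs_le_abs_sub (v (T - s)) (v T), hs.2]

theorem abs_backward_position_taylor_le (hx : ∀ t ∈ Icc (T - h₀) T, HasDerivAt x (v t) t)
    (hv : ∀ t ∈ Icc (T - h₀) T, HasDerivAt v (E (x t, t)) t) (hE : Differentiable ℝ E)
    (hE₁ : ∀ p, ‖fderiv ℝ E p‖ ≤ M)
    (hW : ∀ s ∈ Icc 0 h₀, ‖((-v (T - s), -1) : ℝ × ℝ)‖ ≤ W) {h : ℝ} (hh : h ∈ Icc 0 h₀) :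
    |x (T - h) - x T + h * v T - h ^ 2 / 2 * E (x T, T)| ≤ M * W * h ^ 3 / 6 := by
  have hsub : Icc 0 h ⊆ Icc 0 h₀ := Icc_subset_Icc_right hh.2
  have := norm_sub_taylor_two_le (f := fun s => x (T - s)) (f₂ := fun s => E (x (T - s), T - s))
    (fun s hs => hasDerivAt_comp_const_sub_of_mem_Icc hx (hsub hs))
    (fun s hs => (hasDerivAt_comp_const_sub_of_mem_Icc hv (hsub hs)).neg.congr_deriv (neg_neg _))
    (fun s hs => (hE _).hasFDerivAt.comp_hasDerivAt s (hasDerivAt_backward_curve hx (hsub hs)))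
    (fun s hs => ((fderiv ℝ E _).le_opNorm _).trans (mul_le_mul (hE₁ _) (hW s (hsub hs))
      (norm_nonneg _) ((norm_nonneg _).trans (hE₁ 0)))) hh.1
  convert this using 2
  simp only [sub_zero, smul_eq_mul, Real.norm_eq_abs]
  ring_nf

theorem abs_backward_velocity_taylor_le (hx : ∀ t ∈ Icc (T - h₀) T, HasDerivAt x (v t) t)
    (hv : ∀ t ∈ Icc (T - h₀) T, HasDerivAt v (E (x t, t)) t) (hE : ContDiff ℝ 2 E)
    (hE₀ : ∀ p, |E p| ≤ M) (hE₁ : ∀ p, ‖fderiv ℝ E p‖ ≤ M)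
    (hE₂ : ∀ p, ‖fderiv ℝ (fderiv ℝ E) p‖ ≤ M)
    (hW : ∀ s ∈ Icc 0 h₀, ‖((-v (T - s), -1) : ℝ × ℝ)‖ ≤ W) {h : ℝ} (hh : h ∈ Icc 0 h₀) :
    |v (T - h) - v T + h * E (x T, T) + h ^ 2 / 2 * fderiv ℝ E (x T, T) (-v T, -1)|
      ≤ (M * W ^ 2 + M * M) * h ^ 3 / 6 := by
  have hsub : Icc 0 h ⊆ Icc 0 h₀ := Icc_subset_Icc_right hh.2
  have hE' : Differentiable ℝ (fderiv ℝ E) :=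
    (hE.fderiv_right (m := 1) (by norm_num)).differentiable (by norm_num)
  have := norm_sub_taylor_two_le (f := fun s => v (T - s))
    (f₁ := fun s => -E (x (T - s), T - s))
    (f₂ := fun s => -fderiv ℝ E (x (T - s), T - s) (-v (T - s), -1))
    (fun s hs => hasDerivAt_comp_const_sub_of_mem_Icc hv (hsub hs))
    (fun s hs => ((hE.differentiable (by norm_num) _).hasFDerivAt.comp_hasDerivAt s
      (hasDerivAt_backward_curve hx (hsub hs))).neg)
    (fun s hs => (hasDerivAt_fderiv_comp_apply (w := fun s => ((-v (T - s), -1) : ℝ × ℝ))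
      (hE' _) (hasDerivAt_backward_curve hx (hsub hs))
      (hasDerivAt_backward_tangent hv (hsub hs))).neg)
    (fun s hs => (norm_neg _).trans_le (norm_fderiv_fderiv_apply_add_le (hE₁ _) (hE₂ _)
      (hW s (hsub hs)) (by simpa using hE₀ _))) hh.1
  convert this using 2
  simp only [sub_zero, smul_eq_mul, Real.norm_eq_abs]
  ring_nf

theorem abs_sub_heun_position_le (hx : ∀ t ∈ Icc (T - h₀) T, HasDerivAt x (v t) t)
    (hv : ∀ t ∈ Icc (T - h₀) T, HasDerivAt v (E (x t, t)) t) (hE : Differentiable ℝ E)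
    (hE₁ : ∀ p, ‖fderiv ℝ E p‖ ≤ M)
    (hW : ∀ s ∈ Icc 0 h₀, ‖((-v (T - s), -1) : ℝ × ℝ)‖ ≤ W) {h : ℝ} (hh : h ∈ Icc 0 h₀) :
    |x (T - h) - (x T - h / 2 * (v T + (v T - E (x T, T - h) * h)))|
      ≤ (M * W / 6 + M / 2) * h ^ 3 := by
  have hlip : |E (x T, T) - E (x T, T - h)| ≤ M * h := by
    simpa [abs_of_nonneg hh.1, max_eq_right hh.1] using
      convex_univ.norm_image_sub_le_of_norm_fderiv_le (fun z _ => hE z) (fun z _ => hE₁ z)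
        (mem_univ (x T, T - h)) (mem_univ (x T, T))
  have htaylor := abs_backward_position_taylor_le hx hv hE hE₁ hW hh
  calc _ = |(x (T - h) - x T + h * v T - h ^ 2 / 2 * E (x T, T))
          + h ^ 2 / 2 * (E (x T, T) - E (x T, T - h))| := by ring_nf
    _ ≤ M * W * h ^ 3 / 6 + h ^ 2 / 2 * (M * h) := by
        refine (abs_add_le _ _).trans (add_le_add htaylor ?_)
        rw [abs_mul, abs_of_nonneg (by positivity)]
        gcongr
    _ = _ := by ring

theorem abs_sub_heun_velocity_le (hx : ∀ t ∈ Icc (T - h₀) T, HasDerivAt x (v t) t)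
    (hv : ∀ t ∈ Icc (T - h₀) T, HasDerivAt v (E (x t, t)) t) (hE : ContDiff ℝ 2 E)
    (hE₀ : ∀ p, |E p| ≤ M) (hE₁ : ∀ p, ‖fderiv ℝ E p‖ ≤ M)
    (hE₂ : ∀ p, ‖fderiv ℝ (fderiv ℝ E) p‖ ≤ M)
    (hW : ∀ s ∈ Icc 0 h₀, ‖((-v (T - s), -1) : ℝ × ℝ)‖ ≤ W) {h : ℝ} (hh : h ∈ Icc 0 h₀)
    {e C₀ : ℝ} (he : |e - E (x T, T)| ≤ C₀ * h ^ 2) :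
    |v (T - h) - (v T - h / 2 * (E (x T - v T * h, T - h) + e))|
      ≤ ((M * W ^ 2 + M * M) / 6 + M * W ^ 2 / 2 + C₀ / 2) * h ^ 3 := by
  have hM0 : 0 ≤ M := (abs_nonneg _).trans (hE₀ 0)
  have h0 : 0 ≤ h := hh.1
  have hu : ‖h • ((-v T, -1) : ℝ × ℝ)‖ ≤ h * W := by
    rw [norm_smul, Real.norm_eq_abs, abs_of_nonneg h0]
    exact mul_le_mul_of_nonneg_left (by simpa using hW 0 ⟨le_rfl, h0.trans hh.2⟩) h0
  have hquad := norm_sub_sub_fderiv_le hE hE₂ (x T, T) (h • (-v T, -1))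
  have hpu : (x T, T) + h • ((-v T, -1) : ℝ × ℝ) = (x T - v T * h, T - h) := by
    ext <;> simp <;> ring
  rw [hpu, map_smul, smul_eq_mul, Real.norm_eq_abs] at hquad
  have htaylor := abs_backward_velocity_taylor_le hx hv hE hE₀ hE₁ hE₂ hW hh
  calc _ = |(v (T - h) - v T + h * E (x T, T) + h ^ 2 / 2 * fderiv ℝ E (x T, T) (-v T, -1))
          + h / 2 * (E (x T - v T * h, T - h) - E (x T, T) - h * fderiv ℝ E (x T, T) (-v T, -1))
          + h / 2 * (e - E (x T, T))| := by ring_nf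
    _ ≤ (M * W ^ 2 + M * M) * h ^ 3 / 6 + h / 2 * (M * (h * W) ^ 2) + h / 2 * (C₀ * h ^ 2) := by
        refine (abs_add_three _ _ _).trans (add_le_add_three htaylor ?_ ?_) <;>
          rw [abs_mul, abs_of_nonneg (by positivity)] <;> gcongr
        exact hquad.trans (by gcongr)
    _ = _ := by ring

end BackwardCharacteristic

theorem second_order_characteristic_tracing_general
    (E : ℝ × ℝ → ℝ) (hE : ContDiff ℝ 2 E)
    (M : ℝ) (hM : ∀ i : ℕ, i ≤ 2 → ∀ p : ℝ × ℝ, ‖iteratedFDeriv ℝ i E p‖ ≤ M)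
    (T h₀ x₀ v₀ : ℝ)
    (x v : ℝ → ℝ)
    (hx : ∀ t ∈ Set.Icc (T - h₀) T, HasDerivAt x (v t) t)
    (hv : ∀ t ∈ Set.Icc (T - h₀) T, HasDerivAt v (E (x t, t)) t)
    (hxT : x T = x₀) (hvT : v T = v₀)
    (C₀ : ℝ) (hC₀ : 0 < C₀)
    (Etilde : ℝ → ℝ)
    (hEtilde : ∀ h : ℝ, 0 < h → h ≤ h₀ → |Etilde h - E (x₀, T)| ≤ C₀ * h ^ 2) :
    ∃ C > 0, ∀ h : ℝ, 0 < h → h ≤ h₀ →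
      |x (T - h) - (x₀ - h / 2 * (v₀ + (v₀ - E (x₀, T - h) * h)))| ≤ C * h ^ 3 ∧
      |v (T - h) - (v₀ - h / 2 * (E (x₀ - v₀ * h, T - h) + Etilde h))| ≤ C * h ^ 3 := by
  have hE₀ (p : ℝ × ℝ) : |E p| ≤ M := by simpa using hM 0 (by norm_num) p
  have hE₁ (p : ℝ × ℝ) : ‖fderiv ℝ E p‖ ≤ M := by simpa using hM 1 (by norm_num) p
  have hE₂ (p : ℝ × ℝ) : ‖fderiv ℝ (fderiv ℝ E) p‖ ≤ M :=
    (norm_fderiv_fderiv_eq_norm_iteratedFDeriv_two E p).trans_le (hM 2 le_rfl p)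
  subst hxT hvT
  set W := max (|v T| + M * h₀) 1
  have hW := norm_backward_tangent_le hv hE₀
  have hM0 : 0 ≤ M := (abs_nonneg _).trans (hE₀ 0)
  have hCx : 0 ≤ M * W / 6 + M / 2 := by positivity
  have hCv : 0 < (M * W ^ 2 + M * M) / 6 + M * W ^ 2 / 2 + C₀ / 2 := by positivity
  refine ⟨_, add_pos_of_nonneg_of_pos hCx hCv, fun h hh hhh₀ => ⟨?_, ?_⟩⟩
  · exact (abs_sub_heun_position_le hx hv (hE.differentiable (by norm_num)) hE₁ hW
      ⟨hh.le, hhh₀⟩).trans (mul_le_mul_of_nonneg_right (by linarith) (by positivity))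
  · exact (abs_sub_heun_velocity_le hx hv hE hE₀ hE₁ hE₂ hW ⟨hh.le, hhh₀⟩
      (hEtilde h hh hhh₀)).trans (mul_le_mul_of_nonneg_right (by linarith) (by positivity))

/-- Second-order predictor-corrector characteristic tracing for the backward problem
`x' = v`, `v' = E(x, t)`, `x T = x₀`, `v T = v₀` is locally third-order accurate,
provided the predicted field value `Ẽ(h)` at time `T` is `O(h²)` accurate. -/
theorem second_order_characteristic_tracing
    (E : ℝ × ℝ → ℝ) (hE : ContDiff ℝ 2 E)
    (M : ℝ) (hM : ∀ i : ℕ, i ≤ 2 → ∀ p : ℝ × ℝ, ‖iteratedFDeriv ℝ i E p‖ ≤ M)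
    (T h₀ x₀ v₀ : ℝ) (hh₀ : 0 < h₀)
    (x v : ℝ → ℝ)
    (hx : ∀ t ∈ Set.Icc (T - h₀) T, HasDerivAt x (v t) t)
    (hv : ∀ t ∈ Set.Icc (T - h₀) T, HasDerivAt v (E (x t, t)) t)
    (hxT : x T = x₀) (hvT : v T = v₀)
    (C₀ : ℝ) (hC₀ : 0 < C₀)
    (Etilde : ℝ → ℝ)
    (hEtilde : ∀ h : ℝ, 0 < h → h ≤ h₀ → |Etilde h - E (x₀, T)| ≤ C₀ * h ^ 2) :
    ∃ C > 0, ∀ h : ℝ, 0 < h → h ≤ h₀ →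
      |x (T - h) - (x₀ - h / 2 * (v₀ + (v₀ - E (x₀, T - h) * h)))| ≤ C * h ^ 3 ∧
      |v (T - h) - (v₀ - h / 2 * (E (x₀ - v₀ * h, T - h) + Etilde h))| ≤ C * h ^ 3 :=
  second_order_characteristic_tracing_general E hE M hM T h₀ x₀ v₀ x v hx hv hxT hvT C₀ hC₀ Etilde
    hEtilde
end

section
/- Let E : ℝ×ℝ → ℝ be C³, bounded together with its partial derivatives up to order three, and let (x(t), v(t)) solve x'(t) = v(t), v'(t) = E(x(t), t), x(T) = x₀, v(T) = v₀ on [T−h₀, T]. Write D(t) = (d/dt) E(x(t), t) for the derivative of the field along the characteristic. Fix C₀ > 0 and suppose for each 0 < h ≤ h₀ numbers Ẽ(h), Ẽ⁻(h), D̃⁺(h), D̃⁻(h) satisfy |Ẽ(h) − E(x₀, T)| ≤ C₀·h³, |Ẽ⁻(h) − E(x(T−h), T−h)| ≤ C₀·h³, |D̃⁺(h) − D(T)| ≤ C₀·h³, and |D̃⁻(h) − D(T−h)| ≤ C₀·h³. Define the third-order approximations x⁽³⁾ = x₀ − v₀·h + (h²/2)·((2/3)·Ẽ(h) + (1/3)·Ẽ⁻(h))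 and v⁽³⁾ = v₀ − Ẽ(h)·h + (h²/2)·((2/3)·D̃⁺(h) + (1/3)·D̃⁻(h)). Then there exists C > 0 such that for all 0 < h ≤ h₀, |x(T−h) − x⁽³⁾| ≤ C·h⁴ and |v(T−h) − v⁽³⁾| ≤ C·h⁴. -/
/-!
Along the characteristic `x' = v`, `v' = G` and `G' = D` with `G t = E (x t, t)`; on the compact
interval `[T - h₀, T]` the function `G` is `C³`, so `D'` and `D''` are bounded there. Integrating a
bound on the last member of such a chain of derivatives gives Taylor's theorem without iterated
derivatives of `x` and `v`: `x` and `v` are expanded at `T` to third order with an `O(h⁴)`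
remainder, `G` and `D` to first order with an `O(h²)` remainder. The quadrature
`h²/2 (2/3 y''(T) + 1/3 y''(T - h))` of the scheme equals `h²/2 y''(T) - h³/6 y'''(T)` up to `h²`
times the first-order remainder of `y''`, and the predicted values enter only multiplied by `h` or
`h²`.
-/

open Set Finset Nat

noncomputable def taylorSum (a : ℕ → ℝ) (c : ℝ) (n : ℕ) (t : ℝ) : ℝ :=
  ∑ k ∈ range (n + 1), a k * (t - c) ^ k / k !

lemma taylorSum_self (a : ℕ → ℝ) (c : ℝ) (n : ℕ) : taylorSum a c n c = a 0 := by
  simp [taylorSum, sum_range_succ']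

lemma hasDerivAt_taylorSum_succ (a : ℕ → ℝ) (c : ℝ) (n : ℕ) (t : ℝ) :
    HasDerivAt (taylorSum a c (n + 1)) (taylorSum (fun k => a (k + 1)) c n t) t := by
  unfold taylorSum
  simp_rw [sum_range_succ' _ (n + 1), pow_zero, factorial_zero, cast_one, mul_one, div_one]
  refine HasDerivAt.add_const _ (HasDerivAt.fun_sum fun k _ => ?_)
  refine ((((hasDerivAt_pow (k + 1) (t - c)).comp_sub_const t c).const_mul
    (a (k + 1))).div_const ((k + 1)! : ℝ)).congr_deriv ?_
  rw [factorial_succ, add_tsub_cancel_right]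
  push_cast
  field_simp

theorem abs_sub_taylorSum_le {s : Set ℝ} (hs : s.OrdConnected) {c K : ℝ} (hc : c ∈ s) :
    ∀ (n : ℕ) (f : ℕ → ℝ → ℝ), (∀ k ≤ n, ∀ t ∈ s, HasDerivWithinAt (f k) (f (k + 1) t) s t) →
      (∀ t ∈ s, |f (n + 1) t| ≤ K) → ∀ t ∈ s,
        |f 0 t - taylorSum (fun k => f k c) c n t| ≤ K * |t - c| ^ (n + 1)
  | 0, f, hf, hK, t, ht => by
    simpa [taylorSum, ← Real.norm_eq_abs] using
      hs.convex.norm_image_sub_le_of_norm_hasDerivWithin_le (hf 0 le_rfl) hK hc ht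
  | n + 1, f, hf, hK, t, ht => by
    have hK₀ : 0 ≤ K := (abs_nonneg _).trans (hK c hc)
    have hsub : uIcc c t ⊆ s := hs.uIcc_subset hc ht
    have hderiv : ∀ u ∈ uIcc c t, HasDerivWithinAt
        (fun u => f 0 u - taylorSum (fun k => f k c) c (n + 1) u)
        (f 1 u - taylorSum (fun k => f (k + 1) c) c n u) (uIcc c t) u := fun u hu =>
      ((hf 0 (Nat.zero_le _) u (hsub hu)).mono hsub).sub
        (hasDerivAt_taylorSum_succ _ c n u).hasDerivWithinAt
    have hbound : ∀ u ∈ uIcc c t,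
        ‖f 1 u - taylorSum (fun k => f (k + 1) c) c n u‖ ≤ K * |t - c| ^ (n + 1) := by
      intro u hu
      refine (abs_sub_taylorSum_le hs hc n (fun k => f (k + 1))
        (fun k hk => hf (k + 1) (by omega)) hK u (hsub hu)).trans ?_
      exact mul_le_mul_of_nonneg_left
        (pow_le_pow_left₀ (abs_nonneg _) (abs_sub_left_of_mem_uIcc hu) _) hK₀
    have := (convex_uIcc c t).norm_image_sub_le_of_norm_hasDerivWithin_le hderiv hbound
      left_mem_uIcc right_mem_uIcc
    simpa [taylorSum_self, Real.norm_eq_abs, pow_succ, mul_assoc] using this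

lemma taylorSum_one_sub (a : ℕ → ℝ) (c h : ℝ) : taylorSum a c 1 (c - h) = a 0 - h * a 1 := by
  simp only [taylorSum, sum_range_succ, sum_range_zero, factorial]
  push_cast
  ring

lemma taylorSum_three_sub (a : ℕ → ℝ) (c h : ℝ) :
    taylorSum a c 3 (c - h) = a 0 - h * a 1 + h ^ 2 / 2 * a 2 - h ^ 3 / 6 * a 3 := by
  simp only [taylorSum, sum_range_succ, sum_range_zero, factorial]
  push_cast
  ring

lemma contDiffOn_succ_of_hasDerivAt {y w : ℝ → ℝ} {s : Set ℝ} (hs : UniqueDiffOn ℝ s) {n : ℕ}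
    (hy : ∀ t ∈ s, HasDerivAt y (w t) t) (hw : ContDiffOn ℝ n w s) :
    ContDiffOn ℝ (n + 1) y s := by
  have h := (contDiffOn_succ_iff_derivWithin (n := n) hs).mpr
    ⟨fun t ht => (hy t ht).differentiableAt.differentiableWithinAt, by simp,
      hw.congr fun t ht => (hy t ht).hasDerivWithinAt.derivWithin (hs t ht)⟩
  exact_mod_cast h

theorem contDiffOn_field_along_solution {E : ℝ × ℝ → ℝ} {x v : ℝ → ℝ} {s : Set ℝ} {n : ℕ}
    (hE : ContDiff ℝ n E) (hs : UniqueDiffOn ℝ s) (hx : ∀ t ∈ s, HasDerivAt x (v t) t)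
    (hv : ∀ t ∈ s, HasDerivAt v (E (x t, t)) t) :
    ContDiffOn ℝ n (fun t => E (x t, t)) s := by
  have hcomp : ∀ k ≤ n, ContDiffOn ℝ k x s → ContDiffOn ℝ k (fun t => E (x t, t)) s :=
    fun k hk hxk => (hE.of_le (by exact_mod_cast hk)).comp_contDiffOn (hxk.prodMk contDiffOn_id)
  suffices ∀ k ≤ n, ContDiffOn ℝ k x s from hcomp n le_rfl (this n le_rfl)
  intro k hk
  induction k with
  | zero =>
    exact contDiffOn_zero.mpr fun t ht => (hx t ht).continuousAt.continuousWithinAt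
  | succ k ih =>
    have hv' : ContDiffOn ℝ (k + 1) v s :=
      contDiffOn_succ_of_hasDerivAt hs hv (hcomp k (by omega) (ih (by omega)))
    exact (contDiffOn_succ_of_hasDerivAt hs hx hv').of_succ

/-- `x, v, G, G', G'', …`, the successive derivatives of `x` when `x' = v` and `v' = G`. -/
noncomputable def characteristicJet (x v G : ℝ → ℝ) (s : Set ℝ) : ℕ → ℝ → ℝ
  | 0 => x
  | 1 => v
  | k + 2 => iteratedDerivWithin k G s

theorem hasDerivWithinAt_characteristicJet {x v G : ℝ → ℝ} {s : Set ℝ} {n : ℕ}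
    (hs : UniqueDiffOn ℝ s) (hx : ∀ t ∈ s, HasDerivAt x (v t) t)
    (hv : ∀ t ∈ s, HasDerivAt v (G t) t) (hG : ContDiffOn ℝ n G s) :
    ∀ k ≤ n + 1, ∀ t ∈ s, HasDerivWithinAt (characteristicJet x v G s k)
      (characteristicJet x v G s (k + 1) t) s t
  | 0, _, t, ht => (hx t ht).hasDerivWithinAt
  | 1, _, t, ht => by simpa [characteristicJet] using (hv t ht).hasDerivWithinAt
  | k + 2, hk, t, ht => by
    have hd := hG.differentiableOn_iteratedDerivWithin (m := k) (by norm_cast; omega) hs t ht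
    simpa [characteristicJet, iteratedDerivWithin_succ] using hd.hasDerivWithinAt

theorem exists_backward_taylor_bounds {E : ℝ × ℝ → ℝ} {x v : ℝ → ℝ} {T h₀ : ℝ}
    (hE : ContDiff ℝ 3 E) (hh₀ : 0 < h₀)
    (hx : ∀ t ∈ Icc (T - h₀) T, HasDerivAt x (v t) t)
    (hv : ∀ t ∈ Icc (T - h₀) T, HasDerivAt v (E (x t, t)) t) :
    ∃ K ≥ 0, ∃ D' : ℝ, ∀ h, 0 ≤ h → h ≤ h₀ →
      |x (T - h) - (x T - h * v T + h ^ 2 / 2 * E (x T, T)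
          - h ^ 3 / 6 * deriv (fun s => E (x s, s)) T)| ≤ K * h ^ 4 ∧
      |E (x (T - h), T - h) - (E (x T, T) - h * deriv (fun s => E (x s, s)) T)| ≤ K * h ^ 2 ∧
      |v (T - h) - (v T - h * E (x T, T) + h ^ 2 / 2 * deriv (fun s => E (x s, s)) T
          - h ^ 3 / 6 * D')| ≤ K * h ^ 4 ∧
      |deriv (fun s => E (x s, s)) (T - h) - (deriv (fun s => E (x s, s)) T - h * D')|
        ≤ K * h ^ 2 := by
  set J := Icc (T - h₀) T
  set G : ℝ → ℝ := fun s => E (x s, s)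
  have hJ : UniqueDiffOn ℝ J := uniqueDiffOn_Icc (by linarith)
  have hT : T ∈ J := right_mem_Icc.mpr (by linarith)
  have hG : ContDiffOn ℝ 3 G J := by
    exact_mod_cast contDiffOn_field_along_solution (n := 3) (by exact_mod_cast hE) hJ hx hv
  set f := characteristicJet x v G J
  have hf := hasDerivWithinAt_characteristicJet (n := 3) hJ hx hv hG
  have hderiv : ∀ t ∈ J, deriv G t = f 3 t := fun t ht => by
    have hGt : DifferentiableAt ℝ G t := (hE.differentiable (by norm_num)).differentiableAt.comp t
      ((hx t ht).differentiableAt.prodMk differentiableAt_id)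
    simp [f, characteristicJet, hGt.derivWithin (hJ t ht)]
  obtain ⟨K₄, hK₄⟩ := isCompact_Icc.exists_bound_of_continuousOn
    (hG.continuousOn_iteratedDerivWithin (m := 2) (by norm_num) hJ)
  obtain ⟨K₅, hK₅⟩ := isCompact_Icc.exists_bound_of_continuousOn
    (hG.continuousOn_iteratedDerivWithin (m := 3) (by norm_num) hJ)
  have hf₄ : ∀ t ∈ J, |f 4 t| ≤ max K₄ K₅ := fun t ht => (hK₄ t ht).trans (le_max_left _ _)
  have hf₅ : ∀ t ∈ J, |f 5 t| ≤ max K₄ K₅ := fun t ht => (hK₅ t ht).trans (le_max_right _ _)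
  refine ⟨max K₄ K₅, (abs_nonneg _).trans (hf₄ T hT), f 4 T, fun h hh hle => ?_⟩
  have hmem : T - h ∈ J := ⟨by linarith, by linarith⟩
  have hdist : |T - h - T| = h := by simp [abs_of_nonneg hh]
  have hx3 := abs_sub_taylorSum_le ordConnected_Icc hT 3 f
    (fun k hk => hf k (by omega)) hf₄ (T - h) hmem
  have hG1 := abs_sub_taylorSum_le ordConnected_Icc hT 1 (fun k => f (k + 2))
    (fun k hk => hf (k + 2) (by omega)) hf₄ (T - h) hmem
  have hv3 := abs_sub_taylorSum_le ordConnected_Icc hT 3 (fun k => f (k + 1))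
    (fun k hk => hf (k + 1) (by omega)) hf₅ (T - h) hmem
  have hD1 := abs_sub_taylorSum_le ordConnected_Icc hT 1 (fun k => f (k + 3))
    (fun k hk => hf (k + 3) (by omega)) hf₅ (T - h) hmem
  simp only [taylorSum_one_sub, taylorSum_three_sub, hdist] at hx3 hG1 hv3 hD1
  rw [hderiv T hT, hderiv _ hmem]
  exact ⟨hx3, hG1, hv3, hD1⟩

/-- `y0, y1, y2, y3` play `y, y', y'', y'''` at `T`, and `yh, y2h` play `y, y''` at `T - h`;
`p1, p2, p2h` are the predicted values of `y1, y2, y2h`. -/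
theorem abs_sub_twoStage_le {h K C yh y0 y1 y2 y3 y2h p1 p2 p2h : ℝ} (hh : 0 ≤ h)
    (hy : |yh - (y0 - h * y1 + h ^ 2 / 2 * y2 - h ^ 3 / 6 * y3)| ≤ K * h ^ 4)
    (hy2 : |y2h - (y2 - h * y3)| ≤ K * h ^ 2)
    (hp1 : |p1 - y1| ≤ C * h ^ 3) (hp2 : |p2 - y2| ≤ C * h ^ 3) (hp2h : |p2h - y2h| ≤ C * h ^ 3) :
    |yh - (y0 - p1 * h + h ^ 2 / 2 * (2 / 3 * p2 + 1 / 3 * p2h))|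
      ≤ (7 / 6 * K + C + C * h / 2) * h ^ 4 := by
  have scale : ∀ {a b : ℝ} (c : ℝ), 0 ≤ c → |a| ≤ b → |c * a| ≤ c * b := fun c hc hab => by
    rw [abs_mul, abs_of_nonneg hc]
    exact mul_le_mul_of_nonneg_left hab hc
  have e₁ := abs_le.mp (scale h hh hp1)
  have e₂ := abs_le.mp (scale (h ^ 2 / 3) (by positivity) hp2)
  have e₃ := abs_le.mp (scale (h ^ 2 / 6) (by positivity) hp2h)
  have e₄ := abs_le.mp (scale (h ^ 2 / 6) (by positivity) hy2)
  have e₀ := abs_le.mp hy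
  exact abs_le.mpr ⟨by linarith, by linarith⟩

theorem third_order_characteristic_tracing_general
    (E : ℝ × ℝ → ℝ) (hE : ContDiff ℝ 3 E)
    (T h₀ x₀ v₀ : ℝ) (hh₀ : 0 < h₀)
    (x v : ℝ → ℝ)
    (hx : ∀ t ∈ Set.Icc (T - h₀) T, HasDerivAt x (v t) t)
    (hv : ∀ t ∈ Set.Icc (T - h₀) T, HasDerivAt v (E (x t, t)) t)
    (hxT : x T = x₀) (hvT : v T = v₀)
    (C₀ : ℝ) (hC₀ : 0 < C₀)
    (Etilde Etilde' Dtilde Dtilde' : ℝ → ℝ)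
    (hEtilde : ∀ h : ℝ, 0 < h → h ≤ h₀ → |Etilde h - E (x₀, T)| ≤ C₀ * h ^ 3)
    (hEtilde' : ∀ h : ℝ, 0 < h → h ≤ h₀ →
      |Etilde' h - E (x (T - h), T - h)| ≤ C₀ * h ^ 3)
    (hDtilde : ∀ h : ℝ, 0 < h → h ≤ h₀ →
      |Dtilde h - deriv (fun s => E (x s, s)) T| ≤ C₀ * h ^ 3)
    (hDtilde' : ∀ h : ℝ, 0 < h → h ≤ h₀ →
      |Dtilde' h - deriv (fun s => E (x s, s)) (T - h)| ≤ C₀ * h ^ 3) :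
    ∃ C > 0, ∀ h : ℝ, 0 < h → h ≤ h₀ →
      |x (T - h) - (x₀ - v₀ * h + h ^ 2 / 2 * (2 / 3 * Etilde h + 1 / 3 * Etilde' h))|
        ≤ C * h ^ 4 ∧
      |v (T - h) - (v₀ - Etilde h * h + h ^ 2 / 2 * (2 / 3 * Dtilde h + 1 / 3 * Dtilde' h))|
        ≤ C * h ^ 4 := by
  obtain ⟨K, hK, D', htaylor⟩ := exists_backward_taylor_bounds hE hh₀ hx hv
  refine ⟨7 / 6 * K + C₀ + C₀ * h₀ / 2, by positivity, fun h hh hle => ?_⟩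
  obtain ⟨hx3, hG1, hv3, hD1⟩ := htaylor h hh.le hle
  rw [hxT, hvT] at hx3 hv3
  rw [hxT] at hG1
  have hv₀ : |v₀ - v₀| ≤ C₀ * h ^ 3 := by simp only [sub_self, abs_zero]; positivity
  constructor
  · exact (abs_sub_twoStage_le hh.le hx3 hG1 hv₀ (hEtilde h hh hle)
      (hEtilde' h hh hle)).trans (by gcongr)
  · exact (abs_sub_twoStage_le hh.le hv3 hD1 (hEtilde h hh hle) (hDtilde h hh hle)
      (hDtilde' h hh hle)).trans (by gcongr)

/-- Third-order two-stage multi-derivative predictor-corrector characteristic tracing for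
the backward problem `x' = v`, `v' = E(x, t)`, `x T = x₀`, `v T = v₀` is locally
fourth-order accurate, provided the predicted values `Ẽ(h)`, `Ẽ⁻(h)` of the field at
times `T`, `T−h` and the predicted values `D̃⁺(h)`, `D̃⁻(h)` of the material derivative
`D(t) = (d/dt) E(x(t), t)` at times `T`, `T−h` are all `O(h³)` accurate. -/
theorem third_order_characteristic_tracing
    (E : ℝ × ℝ → ℝ) (hE : ContDiff ℝ 3 E)
    (M : ℝ) (hM : ∀ i : ℕ, i ≤ 3 → ∀ p : ℝ × ℝ, ‖iteratedFDeriv ℝ i E p‖ ≤ M)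
    (T h₀ x₀ v₀ : ℝ) (hh₀ : 0 < h₀)
    (x v : ℝ → ℝ)
    (hx : ∀ t ∈ Set.Icc (T - h₀) T, HasDerivAt x (v t) t)
    (hv : ∀ t ∈ Set.Icc (T - h₀) T, HasDerivAt v (E (x t, t)) t)
    (hxT : x T = x₀) (hvT : v T = v₀)
    (C₀ : ℝ) (hC₀ : 0 < C₀)
    (Etilde Etilde' Dtilde Dtilde' : ℝ → ℝ)
    (hEtilde : ∀ h : ℝ, 0 < h → h ≤ h₀ → |Etilde h - E (x₀, T)| ≤ C₀ * h ^ 3)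
    (hEtilde' : ∀ h : ℝ, 0 < h → h ≤ h₀ →
      |Etilde' h - E (x (T - h), T - h)| ≤ C₀ * h ^ 3)
    (hDtilde : ∀ h : ℝ, 0 < h → h ≤ h₀ →
      |Dtilde h - deriv (fun s => E (x s, s)) T| ≤ C₀ * h ^ 3)
    (hDtilde' : ∀ h : ℝ, 0 < h → h ≤ h₀ →
      |Dtilde' h - deriv (fun s => E (x s, s)) (T - h)| ≤ C₀ * h ^ 3) :
    ∃ C > 0, ∀ h : ℝ, 0 < h → h ≤ h₀ →
      |x (T - h) - (x₀ - v₀ * h + h ^ 2 / 2 * (2 / 3 * Etilde h + 1 / 3 * Etilde' h))|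
        ≤ C * h ^ 4 ∧
      |v (T - h) - (v₀ - Etilde h * h + h ^ 2 / 2 * (2 / 3 * Dtilde h + 1 / 3 * Dtilde' h))|
        ≤ C * h ^ 4 :=
  third_order_characteristic_tracing_general E hE T h₀ x₀ v₀ hh₀ x v hx hv hxT hvT C₀ hC₀ Etilde
    Etilde' Dtilde Dtilde' hEtilde hEtilde' hDtilde hDtilde'
end

section
/- Let g : ℝ → ℝ be C⁴ on a neighborhood of [T−h₀, T] for some h₀ > 0. Then there exists C > 0 such that for all 0 < h ≤ h₀, |g(T−h) − ( g(T) − h·g'(T) + (h²/2)·( (2/3)·g''(T) + (1/3)·g''(T−h) ) )| ≤ C·h⁴. -/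
/-!
Expand `g` around `T` to third order and `g''` around `T` to first order, both with Lagrange
remainders. Substituting, the terms up to `h³` cancel exactly: the weight `1/3` on `g''(T - h)`
contributes `-h³ g'''(T)/6`, which is the cubic Taylor term of `g`. What remains is
`h⁴ (g⁗(ξ)/24 - g⁗(ζ)/12)`, bounded by `h⁴ sup |g⁗| / 8` on `[T - h₀, T]`.
-/

open Set Finset Nat

theorem ContDiffOn.continuousOn_iteratedDeriv_of_isOpen {𝕜 F : Type*}
    [NontriviallyNormedField 𝕜] [NormedAddCommGroup F] [NormedSpace 𝕜 F] {f : 𝕜 → F}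
    {U : Set 𝕜} {n : WithTop ℕ∞} {k : ℕ} (hf : ContDiffOn 𝕜 n f U) (hU : IsOpen U)
    (hk : k ≤ n) : ContinuousOn (iteratedDeriv k f) U :=
  (hf.continuousOn_iteratedDerivWithin hk hU.uniqueDiffOn).congr
    fun _ hx => (iteratedDerivWithin_of_isOpen hU hx).symm

theorem taylor_mean_remainder_lagrange_of_isOpen {f : ℝ → ℝ} {U : Set ℝ} {x₀ x : ℝ} {n : ℕ}
    (hU : IsOpen U) (hf : ContDiffOn ℝ (n + 1) f U) (hxU : uIcc x₀ x ⊆ U) (hx : x₀ ≠ x) :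
    ∃ x' ∈ uIoo x₀ x, f x = ∑ k ∈ range (n + 1), iteratedDeriv k f x₀ / k ! * (x - x₀) ^ k +
      iteratedDeriv (n + 1) f x' * (x - x₀) ^ (n + 1) / (n + 1)! := by
  obtain ⟨x', hx', hrem⟩ := taylor_mean_remainder_lagrange_iteratedDeriv hx (hf.mono hxU)
  have hpoly : taylorWithinEval f n (uIcc x₀ x) x₀ x =
      ∑ k ∈ range (n + 1), iteratedDeriv k f x₀ / k ! * (x - x₀) ^ k := by
    rw [taylor_within_apply]
    refine sum_congr rfl fun k hk => ?_
    rw [iteratedDerivWithin_eq_iteratedDeriv (uniqueDiffOn_uIcc hx)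
      ((hf.of_le (by exact_mod_cast (mem_range.1 hk).le)).contDiffAt
        (hU.mem_nhds (hxU left_mem_uIcc))) left_mem_uIcc, smul_eq_mul]
    ring
  exact ⟨x', hx', by rw [← hpoly, ← hrem, add_sub_cancel]⟩

theorem exists_two_stage_backward_error_eq {g : ℝ → ℝ} {U : Set ℝ} {T h : ℝ} (hU : IsOpen U)
    (hg : ContDiffOn ℝ 4 g U) (hsub : uIcc T (T - h) ⊆ U) (hh : h ≠ 0) :
    ∃ ξ ∈ uIoo T (T - h), ∃ ζ ∈ uIoo T (T - h),
      g (T - h) - (g T - h * deriv g T +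
          h ^ 2 / 2 * (2 / 3 * deriv (deriv g) T + 1 / 3 * deriv (deriv g) (T - h))) =
        h ^ 4 * (iteratedDeriv 4 g ξ / 24 - iteratedDeriv 4 g ζ / 12) := by
  have hT : T ≠ T - h := fun hT => hh (by linarith)
  have hg'' : ContDiffOn ℝ 2 (deriv (deriv g)) U :=
    (hg.deriv_of_isOpen (m := 3) hU (by norm_num)).deriv_of_isOpen hU (by norm_num)
  obtain ⟨ξ, hξ, hg_taylor⟩ := taylor_mean_remainder_lagrange_of_isOpen (n := 3) hU hg hsub hT
  obtain ⟨ζ, hζ, hg''_taylor⟩ :=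
    taylor_mean_remainder_lagrange_of_isOpen (n := 1) hU hg'' hsub hT
  refine ⟨ξ, hξ, ζ, hζ, ?_⟩
  rw [hg_taylor, hg''_taylor]
  simp only [sum_range_succ, sum_range_zero, iteratedDeriv_succ', iteratedDeriv_zero, factorial]
  push_cast
  ring

/-- The two-stage multi-derivative backward formula
`g(T−h) ≈ g(T) − h g'(T) + (h²/2)((2/3) g''(T) + (1/3) g''(T−h))`
is locally fourth-order accurate for `g` that is `C⁴` on a neighborhood of `[T−h₀, T]`. -/
theorem two_stage_multiderivative_backward_formula
    (g : ℝ → ℝ) (T h₀ : ℝ) (hh₀ : 0 < h₀)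
    (U : Set ℝ) (hU : IsOpen U) (hUsub : Set.Icc (T - h₀) T ⊆ U)
    (hg : ContDiffOn ℝ 4 g U) :
    ∃ C > 0, ∀ h : ℝ, 0 < h → h ≤ h₀ →
      |g (T - h) -
          (g T - h * deriv g T +
            h ^ 2 / 2 * (2 / 3 * deriv (deriv g) T + 1 / 3 * deriv (deriv g) (T - h)))|
        ≤ C * h ^ 4 := by
  obtain ⟨M, hM⟩ := isCompact_Icc.exists_bound_of_continuousOn
    ((hg.continuousOn_iteratedDeriv_of_isOpen hU le_rfl).mono hUsub)
  have hM0 : 0 ≤ M := (norm_nonneg _).trans (hM T ⟨by linarith, le_rfl⟩)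
  refine ⟨M / 8 + 1, by positivity, fun h hh hhh₀ => ?_⟩
  have hsub : uIcc T (T - h) ⊆ Icc (T - h₀) T := by
    rw [Set.uIcc_of_ge (by linarith)]
    exact Icc_subset_Icc_left (by linarith)
  obtain ⟨ξ, hξ, ζ, hζ, herror⟩ :=
    exists_two_stage_backward_error_eq hU hg (hsub.trans hUsub) hh.ne'
  have hξM := abs_le.1 (hM ξ (hsub (Ioo_subset_Icc_self hξ)))
  have hζM := abs_le.1 (hM ζ (hsub (Ioo_subset_Icc_self hζ)))
  have hremainder : |iteratedDeriv 4 g ξ / 24 - iteratedDeriv 4 g ζ / 12| ≤ M / 8 :=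
    abs_le.2 ⟨by linarith, by linarith⟩
  calc _ = h ^ 4 * |iteratedDeriv 4 g ξ / 24 - iteratedDeriv 4 g ζ / 12| := by
        rw [herror, abs_mul, abs_of_nonneg (by positivity)]
    _ ≤ h ^ 4 * (M / 8 + 1) := by gcongr; linarith
    _ = (M / 8 + 1) * h ^ 4 := mul_comm _ _
end

section
/- Let f : ℝ×ℝ×ℝ → ℝ be C¹ with a global Lipschitz constant in (x, v), satisfying the Vlasov equation ∂_t f + v·∂_x f + E(x,t)·∂_v f = 0 for a C¹ field E : ℝ×ℝ → ℝ, and let (x(t), v(t)) solve x'(t) = v(t), v'(t) = E(x(t), t), x(T) = x₀, v(T) = v₀ on [T−h₀, T]. Then there exists C > 0 such that for all 0 < h ≤ h₀, the first-order semi-Lagrangian update satisfies |f(x₀ − v₀·h, v₀ − E(x₀, T−h)·h, T−h) − f(x₀, v₀, T)| ≤ C·h². -/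
/-!
Along a characteristic the Vlasov equation says exactly that `f` is constant, so
`f (x₀, v₀, T) = f (x (T - h), v (T - h), T - h)`. The semi-Lagrangian update replaces this exact
foot by one backward Euler step of the characteristic system. Since `x' = v` and
`v' = E (x, t)` are Lipschitz in `t` on the compact time interval (and `E` is Lipschitz on a
compact set containing all points involved), that step is off by `O(h²)`, and the Lipschitz bound
on `f` in `(x, v)` transfers this error to the values of `f`.
-/

open Set

theorem hasDerivAt_comp_prod_prod_of_partials {f : ℝ × ℝ × ℝ → ℝ} {X V : ℝ → ℝ}
    {X' V' t : ℝ} (hf : DifferentiableAt ℝ f (X t, V t, t)) (hX : HasDerivAt X X' t)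
    (hV : HasDerivAt V V' t) :
    HasDerivAt (fun s => f (X s, V s, s))
      (deriv (fun s => f (X t, V t, s)) t + X' * deriv (fun y => f (y, V t, t)) (X t) +
        V' * deriv (fun w => f (X t, w, t)) (V t)) t := by
  have hF := hf.hasFDerivAt
  have hpx : deriv (fun y => f (y, V t, t)) (X t) = fderiv ℝ f (X t, V t, t) (1, 0, 0) :=
    (hF.comp_hasDerivAt (X t) ((hasDerivAt_id _).prodMk
      ((hasDerivAt_const _ _).prodMk (hasDerivAt_const _ _)))).deriv
  have hpv : deriv (fun w => f (X t, w, t)) (V t) = fderiv ℝ f (X t, V t, t) (0, 1, 0) :=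
    (hF.comp_hasDerivAt (V t) ((hasDerivAt_const _ _).prodMk
      ((hasDerivAt_id _).prodMk (hasDerivAt_const _ _)))).deriv
  have hpt : deriv (fun s => f (X t, V t, s)) t = fderiv ℝ f (X t, V t, t) (0, 0, 1) :=
    (hF.comp_hasDerivAt t ((hasDerivAt_const _ _).prodMk
      ((hasDerivAt_const _ _).prodMk (hasDerivAt_id _)))).deriv
  have hdir : ((X', V', 1) : ℝ × ℝ × ℝ) = X' • (1, 0, 0) + V' • (0, 1, 0) + (0, 0, 1) := by simp
  refine (hF.comp_hasDerivAt t (hX.prodMk (hV.prodMk (hasDerivAt_id t)))).congr_deriv ?_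
  rw [hpx, hpv, hpt, hdir, map_add, map_add, map_smul, map_smul, smul_eq_mul, smul_eq_mul]
  ring

theorem vlasov_apply_characteristic_eq {f : ℝ × ℝ × ℝ → ℝ} {E : ℝ × ℝ → ℝ} {x v : ℝ → ℝ}
    {a b s : ℝ} (hf : Differentiable ℝ f)
    (hVlasov : ∀ x v t : ℝ,
      deriv (fun s => f (x, v, s)) t + v * deriv (fun y => f (y, v, t)) x +
        E (x, t) * deriv (fun w => f (x, w, t)) v = 0)
    (hx : ∀ t ∈ Icc a b, HasDerivAt x (v t) t)
    (hv : ∀ t ∈ Icc a b, HasDerivAt v (E (x t, t)) t) (hs : s ∈ Icc a b) :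
    f (x s, v s, s) = f (x b, v b, b) := by
  have hderiv : ∀ t ∈ Icc a b, HasDerivAt (fun s => f (x s, v s, s)) 0 t := fun t ht => by
    simpa only [hVlasov] using hasDerivAt_comp_prod_prod_of_partials (hf _) (hx t ht) (hv t ht)
  have hconst := constant_of_has_deriv_right_zero
    (fun t ht => (hderiv t ht).continuousAt.continuousWithinAt)
    (fun t ht => (hderiv t (Ico_subset_Icc_self ht)).hasDerivWithinAt)
  rw [hconst s hs, hconst b (right_mem_Icc.2 (hs.1.trans hs.2))]

theorem abs_sub_sub_mul_le_of_abs_deriv_sub_le {y y' : ℝ → ℝ} {b c h M : ℝ} (hh : 0 ≤ h)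
    (hy : ∀ t ∈ Icc (b - h) b, HasDerivWithinAt y (y' t) (Icc (b - h) b) t)
    (hM : ∀ t ∈ Icc (b - h) b, |y' t - c| ≤ M) :
    |y (b - h) - (y b - c * h)| ≤ M * h := by
  have hstep := (convex_Icc (b - h) b).norm_image_sub_le_of_norm_hasDerivWithin_le
    (f := fun t => y t - c * t)
    (fun t ht => (hy t ht).sub ((hasDerivWithinAt_id _ _).const_mul c))
    (by simpa using hM) (right_mem_Icc.2 (by linarith)) (left_mem_Icc.2 (by linarith))
  convert hstep using 2
  · simp only [Real.norm_eq_abs]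
    ring_nf
  · rw [Real.norm_eq_abs, sub_sub_cancel_left, abs_neg, abs_of_nonneg hh]

theorem exists_abs_sub_le_mul_of_hasDerivAt {y y' : ℝ → ℝ} {a b : ℝ}
    (hy : ∀ t ∈ Icc a b, HasDerivAt y (y' t) t) (hy' : ContinuousOn y' (Icc a b)) :
    ∃ M ≥ 0, ∀ s ∈ Icc a b, |y s - y b| ≤ M * (b - s) := by
  obtain ⟨M, hM⟩ := isCompact_Icc.exists_bound_of_continuousOn hy'
  refine ⟨max M 0, le_max_right _ _, fun s hs => ?_⟩
  have hsub : Icc (b - (b - s)) b ⊆ Icc a b := by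
    rw [sub_sub_cancel]
    exact Icc_subset_Icc_left hs.1
  simpa using abs_sub_sub_mul_le_of_abs_deriv_sub_le (c := 0) (sub_nonneg.2 hs.2)
    (fun t ht => (hy t (hsub ht)).hasDerivWithinAt)
    (fun t ht => by simpa using (hM t (hsub ht)).trans (le_max_left M 0))

theorem exists_dist_characteristic_foot_le {E : ℝ × ℝ → ℝ} {x v : ℝ → ℝ} {T h₀ : ℝ}
    (hE : ContDiff ℝ 1 E)
    (hx : ∀ t ∈ Icc (T - h₀) T, HasDerivAt x (v t) t)
    (hv : ∀ t ∈ Icc (T - h₀) T, HasDerivAt v (E (x t, t)) t) :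
    ∃ C ≥ 0, ∀ h, 0 ≤ h → h ≤ h₀ →
      dist (x T - v T * h, v T - E (x T, T - h) * h) (x (T - h), v (T - h)) ≤ C * h ^ 2 := by
  have hxc : ContinuousOn x (Icc (T - h₀) T) := fun t ht =>
    (hx t ht).continuousAt.continuousWithinAt
  have hvc : ContinuousOn v (Icc (T - h₀) T) := fun t ht =>
    (hv t ht).continuousAt.continuousWithinAt
  obtain ⟨Mx, hMx, hxLip⟩ := exists_abs_sub_le_mul_of_hasDerivAt hx hvc
  obtain ⟨Mv, hMv, hvLip⟩ := exists_abs_sub_le_mul_of_hasDerivAt hv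
    (hE.continuous.comp_continuousOn (hxc.prodMk continuousOn_id))
  obtain ⟨L, hL⟩ := hE.locallyLipschitz.locallyLipschitzOn.exists_lipschitzOnWith_of_compact
    ((isCompact_Icc.image_of_continuousOn hxc).prod (isCompact_Icc (a := T - h₀) (b := T)))
  refine ⟨Mv + L * (Mx + 1), by positivity, fun h hh hhh₀ => ?_⟩
  have hsub : Icc (T - h) T ⊆ Icc (T - h₀) T := Icc_subset_Icc_left (by linarith)
  have hTI : T ∈ Icc (T - h₀) T := right_mem_Icc.2 (by linarith)
  have hxerr : |x (T - h) - (x T - v T * h)| ≤ Mv * h * h :=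
    abs_sub_sub_mul_le_of_abs_deriv_sub_le hh (fun t ht => (hx t (hsub ht)).hasDerivWithinAt)
      fun t ht => (hvLip t (hsub ht)).trans (by nlinarith [ht.1])
  have hverr : |v (T - h) - (v T - E (x T, T - h) * h)| ≤ L * (Mx + 1) * h * h := by
    refine abs_sub_sub_mul_le_of_abs_deriv_sub_le hh
      (fun t ht => (hv t (hsub ht)).hasDerivWithinAt) fun t ht => ?_
    have hdist : dist (x t, t) (x T, T - h) ≤ (Mx + 1) * h := by
      rw [Prod.dist_eq, Real.dist_eq, Real.dist_eq]
      refine max_le ((hxLip t (hsub ht)).trans (by nlinarith [ht.1])) ?_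
      rw [abs_le]
      constructor <;> nlinarith [ht.1, ht.2]
    calc |E (x t, t) - E (x T, T - h)| = dist (E (x t, t)) (E (x T, T - h)) := rfl
      _ ≤ L * dist (x t, t) (x T, T - h) :=
        hL.dist_le_mul _ ⟨mem_image_of_mem x (hsub ht), hsub ht⟩ _
          ⟨mem_image_of_mem x hTI, ⟨by linarith, by linarith⟩⟩
      _ ≤ L * (Mx + 1) * h := by
        rw [mul_assoc]
        exact mul_le_mul_of_nonneg_left hdist L.coe_nonneg
  rw [Prod.dist_eq, Real.dist_eq, Real.dist_eq, abs_sub_comm, abs_sub_comm (v T - _)]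
  refine max_le (hxerr.trans ?_) (hverr.trans ?_) <;>
    nlinarith [L.coe_nonneg, mul_nonneg (mul_nonneg L.coe_nonneg (by linarith : 0 ≤ Mx + 1))
      (sq_nonneg h), mul_nonneg hMv (sq_nonneg h)]

theorem semi_lagrangian_first_order_update_general
    (f : ℝ × ℝ × ℝ → ℝ) (hf : ContDiff ℝ 1 f)
    (K : NNReal) (hLip : ∀ t : ℝ, LipschitzWith K (fun p : ℝ × ℝ => f (p.1, p.2, t)))
    (E : ℝ × ℝ → ℝ) (hE : ContDiff ℝ 1 E)
    (hVlasov : ∀ x v t : ℝ,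
      deriv (fun s => f (x, v, s)) t + v * deriv (fun y => f (y, v, t)) x +
        E (x, t) * deriv (fun w => f (x, w, t)) v = 0)
    (T h₀ x₀ v₀ : ℝ)
    (x v : ℝ → ℝ)
    (hx : ∀ t ∈ Set.Icc (T - h₀) T, HasDerivAt x (v t) t)
    (hv : ∀ t ∈ Set.Icc (T - h₀) T, HasDerivAt v (E (x t, t)) t)
    (hxT : x T = x₀) (hvT : v T = v₀) :
    ∃ C > 0, ∀ h : ℝ, 0 < h → h ≤ h₀ →
      |f (x₀ - v₀ * h, v₀ - E (x₀, T - h) * h, T - h) - f (x₀, v₀, T)| ≤ C * h ^ 2 := by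
  subst hxT hvT
  obtain ⟨C, hC, hfoot⟩ := exists_dist_characteristic_foot_le hE hx hv
  refine ⟨K * C + 1, by positivity, fun h hh hhh₀ => ?_⟩
  have hexact : f (x (T - h), v (T - h), T - h) = f (x T, v T, T) :=
    vlasov_apply_characteristic_eq (hf.differentiable one_ne_zero) hVlasov hx hv
      ⟨by linarith, by linarith⟩
  calc _ = dist (f (x T - v T * h, v T - E (x T, T - h) * h, T - h))
        (f (x (T - h), v (T - h), T - h)) := by rw [hexact, Real.dist_eq]
    _ ≤ K * dist (x T - v T * h, v T - E (x T, T - h) * h) (x (T - h), v (T - h)) :=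
      (hLip (T - h)).dist_le_mul (x T - v T * h, v T - E (x T, T - h) * h)
        (x (T - h), v (T - h))
    _ ≤ K * (C * h ^ 2) := mul_le_mul_of_nonneg_left (hfoot h hh.le hhh₀) K.coe_nonneg
    _ ≤ (K * C + 1) * h ^ 2 := by nlinarith [sq_nonneg h]

/-- The first-order semi-Lagrangian update for the Vlasov equation is second-order
accurate in a single time step: evaluating `f` at the approximate foot of the
characteristic `(x₀ − v₀ h, v₀ − E(x₀, T−h) h)` at time `T−h` reproduces
`f(x₀, v₀, T)` up to `O(h²)`. -/
theorem semi_lagrangian_first_order_update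
    (f : ℝ × ℝ × ℝ → ℝ) (hf : ContDiff ℝ 1 f)
    (K : NNReal) (hLip : ∀ t : ℝ, LipschitzWith K (fun p : ℝ × ℝ => f (p.1, p.2, t)))
    (E : ℝ × ℝ → ℝ) (hE : ContDiff ℝ 1 E)
    (hVlasov : ∀ x v t : ℝ,
      deriv (fun s => f (x, v, s)) t + v * deriv (fun y => f (y, v, t)) x +
        E (x, t) * deriv (fun w => f (x, w, t)) v = 0)
    (T h₀ x₀ v₀ : ℝ) (hh₀ : 0 < h₀)
    (x v : ℝ → ℝ)
    (hx : ∀ t ∈ Set.Icc (T - h₀) T, HasDerivAt x (v t) t)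
    (hv : ∀ t ∈ Set.Icc (T - h₀) T, HasDerivAt v (E (x t, t)) t)
    (hxT : x T = x₀) (hvT : v T = v₀) :
    ∃ C > 0, ∀ h : ℝ, 0 < h → h ≤ h₀ →
      |f (x₀ - v₀ * h, v₀ - E (x₀, T - h) * h, T - h) - f (x₀, v₀, T)| ≤ C * h ^ 2 :=
  semi_lagrangian_first_order_update_general f hf K hLip E hE hVlasov T h₀ x₀ v₀ x v hx hv hxT hvT
end

section
/- Let f : ℝ×ℝ×ℝ → ℝ be C², L-periodic in x, with f(x, ·, t) compactly supported in v uniformly for (x, t) in compact sets, satisfying the Vlasov equation ∂_t f + v·∂_x f + E(x,t)·∂_v f = 0, where E is C³, L-periodic in x, satisfies ∂_x E(x,t) = ρ(x,t) − 1 with ρ(x,t) = ∫_ℝ f(x,v,t) dv, and ∫₀^L E(x,t) dx = 0 for all t. Define J(x,t) = ∫_ℝ v·f(x,v,t) dv and M₂(x,t) = ∫_ℝ v²·f(x,v,t) dv. If (x(t), v(t)) solves the characteristic system x'(t) = v(t), v'(t) = E(x(t), t), then for all t in the interval of existence: (d²/dt²) E(x(t), t) = v(t)²·∂_x ρ(x(t),t)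 + ∂_x M₂(x(t),t) − 2·v(t)·∂_x J(x(t),t) − E(x(t),t). -/
/-!
Along a characteristic, the chain rule gives
`(d²/dt²) E(X, t) = E ∂ₓE + V² ∂ₓ²E + 2 V ∂ₜ∂ₓE + ∂ₜ²E`.
Poisson's equation turns `∂ₓE` into `ρ - 1`, `∂ₓ²E` into `∂ₓρ` and, through the continuity
equation `∂ₜρ = -∂ₓJ`, `∂ₜ∂ₓE` into `-∂ₓJ`. The continuity equation also shows that `∂ₜE + J`
depends on `t` only, so by the momentum equation `∂ₜJ = Eρ - ∂ₓM₂` the same holds for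
`∂ₜ²E + Eρ - ∂ₓM₂`. Integrating over a period, where `M₂` and `E²` are periodic and `E` has mean
zero, shows that this function of `t` vanishes, i.e. `∂ₜ²E = ∂ₓM₂ - Eρ`.
-/

open MeasureTheory Filter Topology Set Function Metric

section

variable {F : Type*} [NormedAddCommGroup F] [NormedSpace ℝ F]

theorem DifferentiableAt.hasDerivAt_slice_fst {g : ℝ × ℝ → F} {x t : ℝ}
    (hg : DifferentiableAt ℝ g (x, t)) :
    HasDerivAt (fun y => g (y, t)) (fderiv ℝ g (x, t) (1, 0)) x :=
  hg.hasFDerivAt.comp_hasDerivAt x ((hasDerivAt_id x).prodMk (hasDerivAt_const x t))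

theorem DifferentiableAt.hasDerivAt_slice_snd {g : ℝ × ℝ → F} {x t : ℝ}
    (hg : DifferentiableAt ℝ g (x, t)) :
    HasDerivAt (fun s => g (x, s)) (fderiv ℝ g (x, t) (0, 1)) t :=
  hg.hasFDerivAt.comp_hasDerivAt t ((hasDerivAt_const t x).prodMk (hasDerivAt_id t))

theorem DifferentiableAt.hasDerivAt_slice₁ {g : ℝ × ℝ × ℝ → F} {x v t : ℝ}
    (hg : DifferentiableAt ℝ g (x, v, t)) :
    HasDerivAt (fun y => g (y, v, t)) (fderiv ℝ g (x, v, t) (1, 0, 0)) x :=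
  hg.hasFDerivAt.comp_hasDerivAt x
    ((hasDerivAt_id x).prodMk ((hasDerivAt_const x v).prodMk (hasDerivAt_const x t)))

theorem DifferentiableAt.hasDerivAt_slice₂ {g : ℝ × ℝ × ℝ → F} {x v t : ℝ}
    (hg : DifferentiableAt ℝ g (x, v, t)) :
    HasDerivAt (fun w => g (x, w, t)) (fderiv ℝ g (x, v, t) (0, 1, 0)) v :=
  hg.hasFDerivAt.comp_hasDerivAt v
    ((hasDerivAt_const v x).prodMk ((hasDerivAt_id v).prodMk (hasDerivAt_const v t)))

theorem DifferentiableAt.hasDerivAt_slice₃ {g : ℝ × ℝ × ℝ → F} {x v t : ℝ}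
    (hg : DifferentiableAt ℝ g (x, v, t)) :
    HasDerivAt (fun s => g (x, v, s)) (fderiv ℝ g (x, v, t) (0, 0, 1)) t :=
  hg.hasFDerivAt.comp_hasDerivAt t
    ((hasDerivAt_const t x).prodMk ((hasDerivAt_const t v).prodMk (hasDerivAt_id t)))

theorem ContDiff.fderiv_apply_const {E : Type*} [NormedAddCommGroup E] [NormedSpace ℝ E]
    {g : E → F} {m n : WithTop ℕ∞} (hg : ContDiff ℝ n g) (hmn : m + 1 ≤ n) (u : E) :
    ContDiff ℝ m fun q => fderiv ℝ g q u :=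
  (hg.fderiv_right hmn).clm_apply contDiff_const

theorem ContDiff.fderiv_fderiv_apply_comm {E : Type*} [NormedAddCommGroup E] [NormedSpace ℝ E]
    {g : E → F} (hg : ContDiff ℝ 2 g) (p u w : E) :
    fderiv ℝ (fun q => fderiv ℝ g q u) p w = fderiv ℝ (fun q => fderiv ℝ g q w) p u := by
  have hd : Differentiable ℝ (fderiv ℝ g) :=
    (hg.fderiv_right (m := 1) le_rfl).differentiable one_ne_zero
  rw [fderiv_clm_apply (hd p) (differentiableAt_const _),
    fderiv_clm_apply (hd p) (differentiableAt_const _)]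
  simpa using ((hg.contDiffAt.isSymmSndFDerivAt (by simp)) w u)

theorem ContinuousLinearMap.apply_prod_eq (L : ℝ × ℝ →L[ℝ] F) (a b : ℝ) :
    L (a, b) = a • L (1, 0) + b • L (0, 1) := by
  rw [← L.map_smul, ← L.map_smul, ← L.map_add]
  simp

theorem DifferentiableAt.hasDerivAt_comp_trajectory {g : ℝ × ℝ → F} {X : ℝ → ℝ} {V t : ℝ}
    (hg : DifferentiableAt ℝ g (X t, t)) (hX : HasDerivAt X V t) :
    HasDerivAt (fun r => g (X r, r))
      (V • fderiv ℝ g (X t, t) (1, 0) + fderiv ℝ g (X t, t) (0, 1)) t := by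
  have h := hg.hasFDerivAt.comp_hasDerivAt (f := fun r => (X r, r)) t
    (hX.prodMk (hasDerivAt_id t))
  rwa [ContinuousLinearMap.apply_prod_eq _ V, one_smul] at h

theorem ContDiff.deriv_deriv_comp_trajectory {g : ℝ × ℝ → ℝ} (hg : ContDiff ℝ 2 g)
    {X V : ℝ → ℝ} {t A : ℝ} (hX : ∀ᶠ s in 𝓝 t, HasDerivAt X (V s) s) (hV : HasDerivAt V A t) :
    deriv (fun s => deriv (fun r => g (X r, r)) s) t =
      A * fderiv ℝ g (X t, t) (1, 0)
        + V t ^ 2 * fderiv ℝ (fun q => fderiv ℝ g q (1, 0)) (X t, t) (1, 0)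
        + 2 * V t * fderiv ℝ (fun q => fderiv ℝ g q (1, 0)) (X t, t) (0, 1)
        + fderiv ℝ (fun q => fderiv ℝ g q (0, 1)) (X t, t) (0, 1) := by
  have hpartial (u : ℝ × ℝ) : Differentiable ℝ fun q => fderiv ℝ g q u :=
    (hg.fderiv_apply_const (m := 1) le_rfl u).differentiable one_ne_zero
  have hfirst : (fun s => deriv (fun r => g (X r, r)) s) =ᶠ[𝓝 t]
      fun s => V s * fderiv ℝ g (X s, s) (1, 0) + fderiv ℝ g (X s, s) (0, 1) :=
    hX.mono fun s hs => ((hg.differentiable two_ne_zero _).hasDerivAt_comp_trajectory hs).deriv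
  have hXt := hX.self_of_nhds
  have hsecond : HasDerivAt
      (fun s => V s * fderiv ℝ g (X s, s) (1, 0) + fderiv ℝ g (X s, s) (0, 1)) _ t :=
    (hV.mul ((hpartial (1, 0) _).hasDerivAt_comp_trajectory hXt)).add
      ((hpartial (0, 1) _).hasDerivAt_comp_trajectory hXt)
  rw [hfirst.deriv_eq, hsecond.deriv, hg.fderiv_fderiv_apply_comm _ (0, 1) (1, 0)]
  simp only [smul_eq_mul]
  ring

theorem intervalIntegral.hasDerivAt_integral_of_continuous_deriv {G G' : ℝ → ℝ → F}
    {a b s₀ : ℝ} (hG : ∀ s x, HasDerivAt (G · x) (G' s x) s) (hG' : Continuous (uncurry G'))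
    (hGc : ∀ s, Continuous (G s)) :
    HasDerivAt (fun s => ∫ x in a..b, G s x) (∫ x in a..b, G' s₀ x) s₀ := by
  obtain ⟨C, hC⟩ := ((isCompact_closedBall s₀ 1).prod (isCompact_uIcc (a := a) (b := b)))
    |>.exists_bound_of_continuousOn hG'.continuousOn
  refine (intervalIntegral.hasDerivAt_integral_of_dominated_loc_of_deriv_le (bound := fun _ => C)
    (ball_mem_nhds s₀ one_pos) (Eventually.of_forall fun s => (hGc s).aestronglyMeasurable)
    ((hGc s₀).intervalIntegrable _ _) (hG'.uncurry_left s₀).aestronglyMeasurable ?_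
    intervalIntegrable_const (ae_of_all _ fun x _ s _ => hG s x)).2
  exact ae_of_all _ fun x hx s hs =>
    hC (s, x) ⟨ball_subset_closedBall hs, uIoc_subset_uIcc hx⟩

theorem hasDerivAt_integral_of_continuous_deriv {G G' : ℝ → ℝ → F} {s₀ : ℝ}
    (hG : ∀ s x, HasDerivAt (G · x) (G' s x) s) (hG' : Continuous (uncurry G'))
    (hGc : ∀ s, Continuous (G s)) (hsupp : ∃ R, ∀ᶠ s in 𝓝 s₀, ∀ x, R ≤ |x| → G s x = 0) :
    HasDerivAt (fun s => ∫ x, G s x) (∫ x, G' s₀ x) s₀ := by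
  obtain ⟨R, hR⟩ := hsupp
  have hsupport {g : ℝ → F} (hg : ∀ x, R ≤ |x| → g x = 0) : ∫ x, g x = ∫ x in -R..R, g x := by
    refine (intervalIntegral.integral_eq_integral_of_support_subset fun x hx => ?_).symm
    have hxR : |x| < R := not_le.1 fun h => hx (hg x h)
    exact ⟨(abs_lt.1 hxR).1, (abs_lt.1 hxR).2.le⟩
  have hG's₀ (x : ℝ) (hx : R ≤ |x|) : G' s₀ x = 0 :=
    (hG s₀ x).unique ((hasDerivAt_const s₀ 0).congr_of_eventuallyEq (hR.mono fun s hs => hs x hx))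
  rw [hsupport hG's₀]
  exact (intervalIntegral.hasDerivAt_integral_of_continuous_deriv hG hG' hGc).congr_of_eventuallyEq
    (hR.mono fun s hs => hsupport hs)

theorem intervalIntegral_fderiv_snd_eq_zero {G : ℝ × ℝ → ℝ} (hG : ContDiff ℝ 1 G) {a b : ℝ}
    (h : ∀ s, ∫ x in a..b, G (x, s) = 0) (s : ℝ) :
    ∫ x in a..b, fderiv ℝ G (x, s) (0, 1) = 0 := by
  have hG' := hG.continuous_fderiv one_ne_zero
  have hderiv := intervalIntegral.hasDerivAt_integral_of_continuous_deriv (a := a) (b := b)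
    (s₀ := s) (G := fun s x => G (x, s)) (G' := fun s x => fderiv ℝ G (x, s) (0, 1))
    (fun s x => (hG.differentiable one_ne_zero _).hasDerivAt_slice_snd) (by fun_prop)
    (fun s => by fun_prop)
  simp only [h] at hderiv
  exact hderiv.unique (hasDerivAt_const s 0)

end

theorem eq_zero_of_periodic_of_hasDerivAt_sub_const {G h : ℝ → ℝ} {C L : ℝ} (hL : L ≠ 0)
    (hG : ∀ x, HasDerivAt G (h x - C) x) (hh : Continuous h) (hper : G L = G 0)
    (hmean : ∫ x in (0 : ℝ)..L, h x = 0) : C = 0 := by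
  have hFTC := intervalIntegral.integral_eq_sub_of_hasDerivAt (fun x _ => hG x)
    ((hh.sub continuous_const).intervalIntegrable 0 L)
  rw [intervalIntegral.integral_sub (hh.intervalIntegrable _ _) intervalIntegrable_const, hmean,
    intervalIntegral.integral_const, hper, sub_self, smul_eq_mul, sub_zero, zero_sub,
    neg_eq_zero] at hFTC
  exact (mul_eq_zero.1 hFTC).resolve_left hL

def VanishesForLargeVelocity (g : ℝ × ℝ × ℝ → ℝ) : Prop :=
  ∀ K : Set (ℝ × ℝ), IsCompact K →
    ∃ R : ℝ, ∀ x t : ℝ, (x, t) ∈ K → ∀ v : ℝ, R ≤ |v| → g (x, v, t) = 0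

namespace VanishesForLargeVelocity

variable {g : ℝ × ℝ × ℝ → ℝ}

theorem fderiv_apply (hg : VanishesForLargeVelocity g) (u : ℝ × ℝ × ℝ) :
    VanishesForLargeVelocity fun p => fderiv ℝ g p u := by
  intro K hK
  obtain ⟨R, hR⟩ := hg (cthickening 1 K) hK.cthickening
  refine ⟨R + 1, fun x t hxt v hv => ?_⟩
  have hnear : ∀ᶠ p : ℝ × ℝ × ℝ in 𝓝 (x, v, t),
      (p.1, p.2.2) ∈ thickening 1 K ∧ R < |p.2.1| :=
    ((by fun_prop : Continuous fun p : ℝ × ℝ × ℝ => (p.1, p.2.2)).continuousAt.eventually_mem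
      (isOpen_thickening.mem_nhds (self_subset_thickening one_pos K hxt))).and
      (continuousAt_const.eventually_lt (by fun_prop) (by linarith))
  have hzero : g =ᶠ[𝓝 (x, v, t)] 0 := hnear.mono fun p hp =>
    hR p.1 p.2.2 (thickening_subset_cthickening 1 K hp.1) p.2.1 hp.2.le
  simp [hzero.fderiv_eq]

theorem integrable_mul (hg : VanishesForLargeVelocity g) (hgc : Continuous g) {w : ℝ → ℝ}
    (hw : Continuous w) (x t : ℝ) : Integrable fun v => w v * g (x, v, t) := by
  obtain ⟨R, hR⟩ := hg {(x, t)} isCompact_singleton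
  refine (by fun_prop : Continuous fun v => w v * g (x, v, t)).integrable_of_hasCompactSupport
    (HasCompactSupport.intro (isCompact_closedBall 0 R) fun v hv => ?_)
  rw [hR x t rfl v (by simpa [Real.dist_eq] using hv : R < |v|).le, mul_zero]

theorem exists_eventually_along (hg : VanishesForLargeVelocity g) {γ : ℝ → ℝ × ℝ}
    (hγ : Continuous γ) (s₀ : ℝ) :
    ∃ R, ∀ᶠ s in 𝓝 s₀, ∀ v, R ≤ |v| → g ((γ s).1, v, (γ s).2) = 0 := by
  obtain ⟨R, hR⟩ := hg _ ((isCompact_closedBall s₀ 1).image hγ)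
  exact ⟨R, eventually_of_mem (closedBall_mem_nhds s₀ one_pos) fun s hs =>
    hR _ _ (mem_image_of_mem γ hs)⟩

end VanishesForLargeVelocity

def VlasovEquation (f : ℝ × ℝ × ℝ → ℝ) (E : ℝ × ℝ → ℝ) : Prop :=
  ∀ x v t : ℝ, deriv (fun s => f (x, v, s)) t + v * deriv (fun y => f (y, v, t)) x +
    E (x, t) * deriv (fun w => f (x, w, t)) v = 0

def PoissonEquation (f : ℝ × ℝ × ℝ → ℝ) (E : ℝ × ℝ → ℝ) : Prop :=
  ∀ x t : ℝ, deriv (fun y => E (y, t)) x = (∫ v : ℝ, f (x, v, t)) - 1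

section Moments

variable {f : ℝ × ℝ × ℝ → ℝ} {w : ℝ → ℝ}

theorem hasDerivAt_moment_x (hf : ContDiff ℝ 1 f) (hsupp : VanishesForLargeVelocity f)
    (hw : Continuous w) (x t : ℝ) :
    HasDerivAt (fun y => ∫ v, w v * f (y, v, t))
      (∫ v, w v * fderiv ℝ f (x, v, t) (1, 0, 0)) x := by
  have hf' := hf.continuous_fderiv one_ne_zero
  obtain ⟨R, hR⟩ := hsupp.exists_eventually_along (γ := fun y => (y, t)) (by fun_prop) x
  exact hasDerivAt_integral_of_continuous_deriv
    (fun y v => (hf.differentiable one_ne_zero _).hasDerivAt_slice₁.const_mul (w v))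
    (by fun_prop) (fun y => by fun_prop) ⟨R, hR.mono fun y hy v hv => by simp [hy v hv]⟩

theorem hasDerivAt_moment_t (hf : ContDiff ℝ 1 f) (hsupp : VanishesForLargeVelocity f)
    (hw : Continuous w) (x t : ℝ) :
    HasDerivAt (fun s => ∫ v, w v * f (x, v, s))
      (∫ v, w v * fderiv ℝ f (x, v, t) (0, 0, 1)) t := by
  have hf' := hf.continuous_fderiv one_ne_zero
  obtain ⟨R, hR⟩ := hsupp.exists_eventually_along (γ := fun s => (x, s)) (by fun_prop) t
  exact hasDerivAt_integral_of_continuous_deriv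
    (fun s v => (hf.differentiable one_ne_zero _).hasDerivAt_slice₃.const_mul (w v))
    (by fun_prop) (fun s => by fun_prop) ⟨R, hR.mono fun s hs v hv => by simp [hs v hv]⟩

theorem hasDerivAt_density_x (hf : ContDiff ℝ 1 f) (hsupp : VanishesForLargeVelocity f)
    (x t : ℝ) :
    HasDerivAt (fun y => ∫ v, f (y, v, t)) (∫ v, fderiv ℝ f (x, v, t) (1, 0, 0)) x := by
  simpa using hasDerivAt_moment_x hf hsupp (w := fun _ => 1) continuous_const x t

theorem hasDerivAt_density_t (hf : ContDiff ℝ 1 f) (hsupp : VanishesForLargeVelocity f)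
    (x t : ℝ) :
    HasDerivAt (fun s => ∫ v, f (x, v, s)) (∫ v, fderiv ℝ f (x, v, t) (0, 0, 1)) t := by
  simpa using hasDerivAt_moment_t hf hsupp (w := fun _ => 1) continuous_const x t

theorem integral_mul_fderiv_v (hf : ContDiff ℝ 1 f) (hsupp : VanishesForLargeVelocity f)
    {w' : ℝ → ℝ} (hw : ∀ v, HasDerivAt w (w' v) v) (hw' : Continuous w') (x t : ℝ) :
    ∫ v, w v * fderiv ℝ f (x, v, t) (0, 1, 0) = -∫ v, w' v * f (x, v, t) := by
  have hwc : Continuous w := continuous_iff_continuousAt.2 fun v => (hw v).continuousAt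
  have hf' := hf.continuous_fderiv one_ne_zero
  exact integral_mul_deriv_eq_deriv_mul_of_integrable (fun v _ => hw v)
    (fun v _ => (hf.differentiable one_ne_zero _).hasDerivAt_slice₂)
    ((hsupp.fderiv_apply _).integrable_mul (by fun_prop) hwc x t)
    (hsupp.integrable_mul hf.continuous hw' x t) (hsupp.integrable_mul hf.continuous hwc x t)

theorem VlasovEquation.integral_mul_fderiv_t {E : ℝ × ℝ → ℝ} (hV : VlasovEquation f E)
    (hf : ContDiff ℝ 1 f) (hsupp : VanishesForLargeVelocity f)
    {w' : ℝ → ℝ} (hw : ∀ v, HasDerivAt w (w' v) v) (hw' : Continuous w') (x t : ℝ) :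
    ∫ v, w v * fderiv ℝ f (x, v, t) (0, 0, 1) =
      -(∫ v, v * w v * fderiv ℝ f (x, v, t) (1, 0, 0)) + E (x, t) * ∫ v, w' v * f (x, v, t) := by
  have hwc : Continuous w := continuous_iff_continuousAt.2 fun v => (hw v).continuousAt
  have hf' := hf.continuous_fderiv one_ne_zero
  have htransport (v : ℝ) : fderiv ℝ f (x, v, t) (0, 0, 1) =
      -(v * fderiv ℝ f (x, v, t) (1, 0, 0)) - E (x, t) * fderiv ℝ f (x, v, t) (0, 1, 0) := by
    have hd := hf.differentiable one_ne_zero (x, v, t)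
    have h := hV x v t
    rw [hd.hasDerivAt_slice₁.deriv, hd.hasDerivAt_slice₂.deriv, hd.hasDerivAt_slice₃.deriv] at h
    linarith
  calc ∫ v, w v * fderiv ℝ f (x, v, t) (0, 0, 1)
      = ∫ v, -(v * w v * fderiv ℝ f (x, v, t) (1, 0, 0)
          + E (x, t) * (w v * fderiv ℝ f (x, v, t) (0, 1, 0))) := by
        congr 1 with v
        rw [htransport]
        ring
    _ = -((∫ v, v * w v * fderiv ℝ f (x, v, t) (1, 0, 0))
          + E (x, t) * ∫ v, w v * fderiv ℝ f (x, v, t) (0, 1, 0)) := by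
        rw [integral_neg, integral_add
          ((hsupp.fderiv_apply _).integrable_mul (by fun_prop) (by fun_prop) x t)
          (((hsupp.fderiv_apply _).integrable_mul (by fun_prop) hwc x t).const_mul _),
          integral_const_mul]
    _ = _ := by
        rw [integral_mul_fderiv_v hf hsupp hw hw']
        ring

theorem VlasovEquation.integral_fderiv_t {E : ℝ × ℝ → ℝ} (hV : VlasovEquation f E)
    (hf : ContDiff ℝ 1 f) (hsupp : VanishesForLargeVelocity f) (x t : ℝ) :
    ∫ v, fderiv ℝ f (x, v, t) (0, 0, 1) = -∫ v, v * fderiv ℝ f (x, v, t) (1, 0, 0) := by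
  simpa using hV.integral_mul_fderiv_t hf hsupp (w := fun _ => 1) (w' := fun _ => 0)
    (fun v => hasDerivAt_const v 1) continuous_const x t

theorem VlasovEquation.integral_self_mul_fderiv_t {E : ℝ × ℝ → ℝ} (hV : VlasovEquation f E)
    (hf : ContDiff ℝ 1 f) (hsupp : VanishesForLargeVelocity f) (x t : ℝ) :
    ∫ v, v * fderiv ℝ f (x, v, t) (0, 0, 1) =
      -(∫ v, v ^ 2 * fderiv ℝ f (x, v, t) (1, 0, 0)) + E (x, t) * ∫ v, f (x, v, t) := by
  simpa [sq] using hV.integral_mul_fderiv_t hf hsupp (w := fun v => v) (w' := fun _ => 1)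
    (fun v => hasDerivAt_id v) continuous_const x t

end Moments

section VlasovPoisson

variable {f : ℝ × ℝ × ℝ → ℝ} {E : ℝ × ℝ → ℝ}

theorem PoissonEquation.fderiv_x (hP : PoissonEquation f E) (hE : Differentiable ℝ E) (x t : ℝ) :
    fderiv ℝ E (x, t) (1, 0) = (∫ v, f (x, v, t)) - 1 := by
  rw [← (hE _).hasDerivAt_slice_fst.deriv]
  exact hP x t

theorem PoissonEquation.fderiv_x_x (hP : PoissonEquation f E) (hE : ContDiff ℝ 2 E)
    (hf : ContDiff ℝ 1 f) (hsupp : VanishesForLargeVelocity f) (x t : ℝ) :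
    fderiv ℝ (fun q => fderiv ℝ E q (1, 0)) (x, t) (1, 0) =
      ∫ v, fderiv ℝ f (x, v, t) (1, 0, 0) := by
  have h : HasDerivAt (fun y => fderiv ℝ E (y, t) (1, 0)) _ x :=
    ((hE.fderiv_apply_const (m := 1) le_rfl (1, 0)).differentiable one_ne_zero
      (x, t)).hasDerivAt_slice_fst
  rw [funext fun y => hP.fderiv_x (hE.differentiable two_ne_zero) y t] at h
  exact h.unique ((hasDerivAt_density_x hf hsupp x t).sub_const 1)

theorem PoissonEquation.fderiv_x_t (hP : PoissonEquation f E) (hV : VlasovEquation f E)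
    (hE : ContDiff ℝ 2 E) (hf : ContDiff ℝ 1 f) (hsupp : VanishesForLargeVelocity f) (x t : ℝ) :
    fderiv ℝ (fun q => fderiv ℝ E q (1, 0)) (x, t) (0, 1) =
      -∫ v, v * fderiv ℝ f (x, v, t) (1, 0, 0) := by
  have h : HasDerivAt (fun s => fderiv ℝ E (x, s) (1, 0)) _ t :=
    ((hE.fderiv_apply_const (m := 1) le_rfl (1, 0)).differentiable one_ne_zero
      (x, t)).hasDerivAt_slice_snd
  rw [funext fun s => hP.fderiv_x (hE.differentiable two_ne_zero) x s] at h
  rw [h.unique ((hasDerivAt_density_t hf hsupp x t).sub_const 1), hV.integral_fderiv_t hf hsupp]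

theorem PoissonEquation.fderiv_t_add_current_eq (hP : PoissonEquation f E)
    (hV : VlasovEquation f E) (hE : ContDiff ℝ 2 E) (hf : ContDiff ℝ 1 f)
    (hsupp : VanishesForLargeVelocity f) (x y s : ℝ) :
    fderiv ℝ E (x, s) (0, 1) + ∫ v, v * f (x, v, s) =
      fderiv ℝ E (y, s) (0, 1) + ∫ v, v * f (y, v, s) := by
  have hzero (z : ℝ) :
      HasDerivAt (fun y => fderiv ℝ E (y, s) (0, 1) + ∫ v, v * f (y, v, s)) 0 z := by
    have h : HasDerivAt (fun y => fderiv ℝ E (y, s) (0, 1) + ∫ v, v * f (y, v, s)) _ z :=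
      ((hE.fderiv_apply_const (m := 1) le_rfl (0, 1)).differentiable one_ne_zero
        (z, s)).hasDerivAt_slice_fst.add
        (hasDerivAt_moment_x hf hsupp (w := fun v => v) continuous_id' z s)
    rwa [← hE.fderiv_fderiv_apply_comm, hP.fderiv_x_t hV hE hf hsupp, neg_add_cancel] at h
  exact is_const_of_deriv_eq_zero (fun z => (hzero z).differentiableAt)
    (fun z => (hzero z).deriv) x y

theorem PoissonEquation.fderiv_t_t_add_eq (hP : PoissonEquation f E)
    (hV : VlasovEquation f E) (hE : ContDiff ℝ 2 E) (hf : ContDiff ℝ 1 f)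
    (hsupp : VanishesForLargeVelocity f) (x y t : ℝ) :
    fderiv ℝ (fun q => fderiv ℝ E q (0, 1)) (x, t) (0, 1) + E (x, t) * (∫ v, f (x, v, t))
        - ∫ v, v ^ 2 * fderiv ℝ f (x, v, t) (1, 0, 0) =
      fderiv ℝ (fun q => fderiv ℝ E q (0, 1)) (y, t) (0, 1) + E (y, t) * (∫ v, f (y, v, t))
        - ∫ v, v ^ 2 * fderiv ℝ f (y, v, t) (1, 0, 0) := by
  have hEt := (hE.fderiv_apply_const (m := 1) le_rfl (0, 1)).differentiable one_ne_zero
  have hderiv (z : ℝ) :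
      HasDerivAt (fun s => fderiv ℝ E (z, s) (0, 1) + ∫ v, v * f (z, v, s)) _ t :=
    (hEt (z, t)).hasDerivAt_slice_snd.add
      (hasDerivAt_moment_t hf hsupp (w := fun v => v) continuous_id' z t)
  have h := (hderiv x).unique (by
    rw [funext fun s => hP.fderiv_t_add_current_eq hV hE hf hsupp x y s]; exact hderiv y)
  rw [hV.integral_self_mul_fderiv_t hf hsupp, hV.integral_self_mul_fderiv_t hf hsupp] at h
  linarith

theorem PoissonEquation.integral_field_mul_density (hP : PoissonEquation f E)
    (hE : ContDiff ℝ 1 E) {L : ℝ} (hEper : ∀ x t : ℝ, E (x + L, t) = E (x, t))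
    (hEmean : ∀ t : ℝ, ∫ x in (0 : ℝ)..L, E (x, t) = 0) (t : ℝ) :
    ∫ x in (0 : ℝ)..L, E (x, t) * ∫ v, f (x, v, t) = 0 := by
  have hd := hE.differentiable one_ne_zero
  have hE' := hE.continuous_fderiv one_ne_zero
  have hEc := hE.continuous
  have hsq (x : ℝ) :
      HasDerivAt (fun y => E (y, t) ^ 2 / 2) (E (x, t) * fderiv ℝ E (x, t) (1, 0)) x := by
    refine (((hd _).hasDerivAt_slice_fst.fun_pow 2).div_const 2).congr_deriv ?_
    norm_num
    ring
  calc ∫ x in (0 : ℝ)..L, E (x, t) * ∫ v, f (x, v, t)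
      = ∫ x in (0 : ℝ)..L, (E (x, t) * fderiv ℝ E (x, t) (1, 0) + E (x, t)) := by
        congr 1 with x
        rw [hP.fderiv_x hd]
        ring
    _ = (E (L, t) ^ 2 / 2 - E (0, t) ^ 2 / 2) + 0 := by
        rw [intervalIntegral.integral_add (by apply Continuous.intervalIntegrable; fun_prop)
          (by apply Continuous.intervalIntegrable; fun_prop),
          intervalIntegral.integral_eq_sub_of_hasDerivAt (fun x _ => hsq x)
          (by apply Continuous.intervalIntegrable; fun_prop), hEmean]
    _ = 0 := by
        rw [show E (L, t) = E (0, t) by simpa using hEper 0 t]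
        ring

theorem PoissonEquation.fderiv_t_t (hP : PoissonEquation f E) (hV : VlasovEquation f E)
    (hE : ContDiff ℝ 2 E) (hf : ContDiff ℝ 1 f) (hsupp : VanishesForLargeVelocity f) {L : ℝ}
    (hL : L ≠ 0) (hfper : ∀ x v t : ℝ, f (x + L, v, t) = f (x, v, t))
    (hEper : ∀ x t : ℝ, E (x + L, t) = E (x, t))
    (hEmean : ∀ t : ℝ, ∫ x in (0 : ℝ)..L, E (x, t) = 0) (x t : ℝ) :
    fderiv ℝ (fun q => fderiv ℝ E q (0, 1)) (x, t) (0, 1) =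
      (∫ v, v ^ 2 * fderiv ℝ f (x, v, t) (1, 0, 0)) - E (x, t) * ∫ v, f (x, v, t) := by
  have hEt := hE.fderiv_apply_const (m := 1) le_rfl (0, 1)
  have hEtt := hEt.continuous_fderiv one_ne_zero
  have hEx := (hE.fderiv_apply_const (m := 1) le_rfl (1, 0)).continuous
  have hEc := hE.continuous
  have hρ : Continuous fun y => ∫ v, f (y, v, t) := by
    simp only [fun y => eq_add_of_sub_eq (hP.fderiv_x (hE.differentiable two_ne_zero) y t).symm]
    fun_prop
  set c : ℝ → ℝ := fun y =>
    fderiv ℝ (fun q => fderiv ℝ E q (0, 1)) (y, t) (0, 1) + E (y, t) * ∫ v, f (y, v, t)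
  have hM₂ (y : ℝ) : HasDerivAt (fun y => ∫ v, v ^ 2 * f (y, v, t))
      (c y - (c x - ∫ v, v ^ 2 * fderiv ℝ f (x, v, t) (1, 0, 0))) y := by
    convert hasDerivAt_moment_x hf hsupp (w := fun v => v ^ 2) (by fun_prop) y t using 1
    linarith [hP.fderiv_t_t_add_eq hV hE hf hsupp x y t]
  have hmean : ∫ y in (0 : ℝ)..L, c y = 0 := by
    rw [intervalIntegral.integral_add (by apply Continuous.intervalIntegrable; fun_prop)
      (by apply Continuous.intervalIntegrable; fun_prop),
      intervalIntegral_fderiv_snd_eq_zero hEt (intervalIntegral_fderiv_snd_eq_zero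
        (hE.of_le one_le_two) hEmean),
      hP.integral_field_mul_density (hE.of_le one_le_two) hEper hEmean, add_zero]
  have hC := eq_zero_of_periodic_of_hasDerivAt_sub_const hL hM₂ (by fun_prop)
    (by simpa using congrArg (fun g => ∫ v, v ^ 2 * g v) (funext fun v => hfper 0 v t)) hmean
  linarith

end VlasovPoisson

theorem vlasov_poisson_second_material_derivative_of_field_general
    (L : ℝ) (hL : 0 < L)
    (f : ℝ × ℝ × ℝ → ℝ) (hf : ContDiff ℝ 2 f)
    (hfper : ∀ x v t : ℝ, f (x + L, v, t) = f (x, v, t))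
    (hsupp : ∀ K : Set (ℝ × ℝ), IsCompact K → ∃ R : ℝ, ∀ x t : ℝ, (x, t) ∈ K →
      ∀ v : ℝ, R ≤ |v| → f (x, v, t) = 0)
    (E : ℝ × ℝ → ℝ) (hE : ContDiff ℝ 3 E)
    (hEper : ∀ x t : ℝ, E (x + L, t) = E (x, t))
    (hPoisson : ∀ x t : ℝ,
      deriv (fun y => E (y, t)) x = (∫ v : ℝ, f (x, v, t)) - 1)
    (hEmean : ∀ t : ℝ, (∫ x in (0:ℝ)..L, E (x, t)) = 0)
    (hVlasov : ∀ x v t : ℝ,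
      deriv (fun s => f (x, v, s)) t + v * deriv (fun y => f (y, v, t)) x +
        E (x, t) * deriv (fun w => f (x, w, t)) v = 0)
    (I : Set ℝ) (hIopen : IsOpen I)
    (X V : ℝ → ℝ)
    (hX : ∀ t ∈ I, HasDerivAt X (V t) t)
    (hV : ∀ t ∈ I, HasDerivAt V (E (X t, t)) t) :
    ∀ t ∈ I,
      deriv (fun s => deriv (fun r => E (X r, r)) s) t =
        (V t) ^ 2 * deriv (fun y => ∫ v : ℝ, f (y, v, t)) (X t) +
          deriv (fun y => ∫ v : ℝ, v ^ 2 * f (y, v, t)) (X t) -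
          2 * V t * deriv (fun y => ∫ v : ℝ, v * f (y, v, t)) (X t) -
          E (X t, t) := by
  intro t ht
  have hP : PoissonEquation f E := hPoisson
  have hE2 : ContDiff ℝ 2 E := hE.of_le (by norm_num)
  have hf1 : ContDiff ℝ 1 f := hf.of_le one_le_two
  rw [hE2.deriv_deriv_comp_trajectory (eventually_of_mem (hIopen.mem_nhds ht) hX) (hV t ht),
    hP.fderiv_x (hE2.differentiable two_ne_zero), hP.fderiv_x_x hE2 hf1 hsupp,
    hP.fderiv_x_t hVlasov hE2 hf1 hsupp,
    hP.fderiv_t_t hVlasov hE2 hf1 hsupp hL.ne' hfper hEper hEmean,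
    (hasDerivAt_density_x hf1 hsupp (X t) t).deriv,
    (hasDerivAt_moment_x hf1 hsupp (w := fun v => v) continuous_id' (X t) t).deriv,
    (hasDerivAt_moment_x hf1 hsupp (w := fun v => v ^ 2) (by fun_prop) (X t) t).deriv]
  ring

/-- For the periodic 1D-1D Vlasov–Poisson system, along a characteristic
`X' = V`, `V' = E(X, t)` the second material derivative of the field satisfies
`(d²/dt²) E(X(t), t) = V(t)² ∂ₓρ + ∂ₓM₂ − 2 V(t) ∂ₓJ − E(X(t), t)`,
where `ρ = ∫ f dv`, `J = ∫ v f dv`, `M₂ = ∫ v² f dv`. -/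
theorem vlasov_poisson_second_material_derivative_of_field
    (L : ℝ) (hL : 0 < L)
    (f : ℝ × ℝ × ℝ → ℝ) (hf : ContDiff ℝ 2 f)
    (hfper : ∀ x v t : ℝ, f (x + L, v, t) = f (x, v, t))
    (hsupp : ∀ K : Set (ℝ × ℝ), IsCompact K → ∃ R : ℝ, ∀ x t : ℝ, (x, t) ∈ K →
      ∀ v : ℝ, R ≤ |v| → f (x, v, t) = 0)
    (E : ℝ × ℝ → ℝ) (hE : ContDiff ℝ 3 E)
    (hEper : ∀ x t : ℝ, E (x + L, t) = E (x, t))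
    (hPoisson : ∀ x t : ℝ,
      deriv (fun y => E (y, t)) x = (∫ v : ℝ, f (x, v, t)) - 1)
    (hEmean : ∀ t : ℝ, (∫ x in (0:ℝ)..L, E (x, t)) = 0)
    (hVlasov : ∀ x v t : ℝ,
      deriv (fun s => f (x, v, s)) t + v * deriv (fun y => f (y, v, t)) x +
        E (x, t) * deriv (fun w => f (x, w, t)) v = 0)
    (I : Set ℝ) (hIopen : IsOpen I) (hIconn : I.OrdConnected)
    (X V : ℝ → ℝ)
    (hX : ∀ t ∈ I, HasDerivAt X (V t) t)
    (hV : ∀ t ∈ I, HasDerivAt V (E (X t, t)) t) :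
    ∀ t ∈ I,
      deriv (fun s => deriv (fun r => E (X r, r)) s) t =
        (V t) ^ 2 * deriv (fun y => ∫ v : ℝ, f (y, v, t)) (X t) +
          deriv (fun y => ∫ v : ℝ, v ^ 2 * f (y, v, t)) (X t) -
          2 * V t * deriv (fun y => ∫ v : ℝ, v * f (y, v, t)) (X t) -
          E (X t, t) :=
  vlasov_poisson_second_material_derivative_of_field_general L hL f hf hfper hsupp E hE hEper
    hPoisson hEmean hVlasov I hIopen X V hX hV
end

section
/- Let f₋₃, f₋₂, f₋₁, f₀, f₁, f₂ be arbitrary real numbers. For m = 1, 2, 3 let P_m be the unique polynomial of degree ≤ 3 interpolating the data on the substencil S_m, where S₁ = {−3,−2,−1,0}, S₂ = {−2,−1,0,1}, S₃ = {−1,0,1,2}, i.e. P_m(j) = f_j for j ∈ S_m. Define γ₁(ξ) = (1/20)·(ξ−1)·(ξ−2), γ₂(ξ) = −(1/10)·(ξ+3)·(ξ−2), γ₃(ξ) = (1/20)·(ξ+3)·(ξ+2), and Q(ξ) = γ₁(ξ)·P₁(ξ) + γ₂(ξ)·P₂(ξ) + γ₃(ξ)·P₃(ξ). Then Q is the unique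 polynomial of degree ≤ 5 interpolating all six data points, i.e. Q(j) = f_j for every j ∈ {−3,−2,−1,0,1,2}. -/
open Polynomial

/-- Combining the three cubic substencil interpolants `P₁, P₂, P₃` with the WENO linear
weight polynomials `γ₁(ξ) = (1/20)(ξ−1)(ξ−2)`, `γ₂(ξ) = −(1/10)(ξ+3)(ξ−2)`,
`γ₃(ξ) = (1/20)(ξ+3)(ξ+2)` yields the unique degree `≤ 5` polynomial interpolating
all six data points `f_j`, `j ∈ {−3, …, 2}`. -/
theorem weno_linear_combination_is_full_interpolant
    (f : ℤ → ℝ) (P₁ P₂ P₃ : Polynomial ℝ)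
    (hd₁ : P₁.degree ≤ 3) (hd₂ : P₂.degree ≤ 3) (hd₃ : P₃.degree ≤ 3)
    (hi₁ : ∀ j ∈ ({-3, -2, -1, 0} : Finset ℤ), P₁.eval (j : ℝ) = f j)
    (hi₂ : ∀ j ∈ ({-2, -1, 0, 1} : Finset ℤ), P₂.eval (j : ℝ) = f j)
    (hi₃ : ∀ j ∈ ({-1, 0, 1, 2} : Finset ℤ), P₃.eval (j : ℝ) = f j) :
    let γ₁ : Polynomial ℝ := C (1 / 20) * (X - 1) * (X - 2)
    let γ₂ : Polynomial ℝ := C (-(1 / 10)) * (X + 3) * (X - 2)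
    let γ₃ : Polynomial ℝ := C (1 / 20) * (X + 3) * (X + 2)
    let Q : Polynomial ℝ := γ₁ * P₁ + γ₂ * P₂ + γ₃ * P₃
    Q.degree ≤ 5 ∧
      (∀ j ∈ ({-3, -2, -1, 0, 1, 2} : Finset ℤ), Q.eval (j : ℝ) = f j) ∧
      (∀ R : Polynomial ℝ, R.degree ≤ 5 →
        (∀ j ∈ ({-3, -2, -1, 0, 1, 2} : Finset ℤ), R.eval (j : ℝ) = f j) → R = Q) := by
  intro γ₁ γ₂ γ₃ Q
  have hg₁ : γ₁.degree ≤ 2 := by unfold γ₁; compute_degree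
  have hg₂ : γ₂.degree ≤ 2 := by unfold γ₂; compute_degree
  have hg₃ : γ₃.degree ≤ 2 := by unfold γ₃; compute_degree
  have hdQ : Q.degree ≤ 5 := by
    have h1 : (γ₁ * P₁).degree ≤ 5 := le_trans (degree_mul_le _ _)
      (le_trans (add_le_add hg₁ hd₁) (by norm_num))
    have h2 : (γ₂ * P₂).degree ≤ 5 := le_trans (degree_mul_le _ _)
      (le_trans (add_le_add hg₂ hd₂) (by norm_num))
    have h3 : (γ₃ * P₃).degree ≤ 5 := le_trans (degree_mul_le _ _)
      (le_trans (add_le_add hg₃ hd₃) (by norm_num))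
    exact le_trans (degree_add_le _ _) (max_le (le_trans (degree_add_le _ _) (max_le h1 h2)) h3)
  have a1 : P₁.eval (-3) = f (-3) := by have := hi₁ (-3) (by decide); push_cast at this; exact this
  have a2 : P₁.eval (-2) = f (-2) := by have := hi₁ (-2) (by decide); push_cast at this; exact this
  have a3 : P₁.eval (-1) = f (-1) := by have := hi₁ (-1) (by decide); push_cast at this; exact this
  have a4 : P₁.eval 0 = f 0 := by have := hi₁ 0 (by decide); push_cast at this; exact this
  have b2 : P₂.eval (-2) = f (-2) := by have := hi₂ (-2) (by decide); push_cast at this; exact this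
  have b3 : P₂.eval (-1) = f (-1) := by have := hi₂ (-1) (by decide); push_cast at this; exact this
  have b4 : P₂.eval 0 = f 0 := by have := hi₂ 0 (by decide); push_cast at this; exact this
  have b5 : P₂.eval 1 = f 1 := by have := hi₂ 1 (by decide); push_cast at this; exact this
  have c3 : P₃.eval (-1) = f (-1) := by have := hi₃ (-1) (by decide); push_cast at this; exact this
  have c4 : P₃.eval 0 = f 0 := by have := hi₃ 0 (by decide); push_cast at this; exact this
  have c5 : P₃.eval 1 = f 1 := by have := hi₃ 1 (by decide); push_cast at this; exact this
  have c6 : P₃.eval 2 = f 2 := by have := hi₃ 2 (by decide); push_cast at this; exact this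
  have hQi : ∀ j ∈ ({-3, -2, -1, 0, 1, 2} : Finset ℤ), Q.eval (j : ℝ) = f j := by
    intro j hj
    fin_cases hj <;>
      simp only [Q, γ₁, γ₂, γ₃, eval_add, eval_mul, eval_sub, eval_X, eval_C, eval_one,
        eval_ofNat] <;> push_cast <;> ring_nf <;> linarith
  refine ⟨hdQ, hQi, ?_⟩
  intro R hdR hiR
  have q1 : Q.eval (-3) = f (-3) := by have := hQi (-3) (by decide); push_cast at this; exact this
  have q2 : Q.eval (-2) = f (-2) := by have := hQi (-2) (by decide); push_cast at this; exact this
  have q3 : Q.eval (-1) = f (-1) := by have := hQi (-1) (by decide); push_cast at this; exact this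
  have q4 : Q.eval 0 = f 0 := by have := hQi 0 (by decide); push_cast at this; exact this
  have q5 : Q.eval 1 = f 1 := by have := hQi 1 (by decide); push_cast at this; exact this
  have q6 : Q.eval 2 = f 2 := by have := hQi 2 (by decide); push_cast at this; exact this
  have r1 : R.eval (-3) = f (-3) := by have := hiR (-3) (by decide); push_cast at this; exact this
  have r2 : R.eval (-2) = f (-2) := by have := hiR (-2) (by decide); push_cast at this; exact this
  have r3 : R.eval (-1) = f (-1) := by have := hiR (-1) (by decide); push_cast at this; exact this
  have r4 : R.eval 0 = f 0 := by have := hiR 0 (by decide); push_cast at this; exact this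
  have r5 : R.eval 1 = f 1 := by have := hiR 1 (by decide); push_cast at this; exact this
  have r6 : R.eval 2 = f 2 := by have := hiR 2 (by decide); push_cast at this; exact this
  have hsub : R - Q = 0 := by
    apply eq_zero_of_natDegree_lt_card_of_eval_eq_zero' (R - Q)
      ({-3, -2, -1, 0, 1, 2} : Finset ℝ)
    · intro i hi
      simp only [Finset.mem_insert, Finset.mem_singleton] at hi
      rcases hi with rfl | rfl | rfl | rfl | rfl | rfl <;>
        simp only [eval_sub] <;> linarith
    · have hle : (R - Q).degree ≤ 5 := le_trans (degree_sub_le _ _) (max_le hdR hdQ)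
      have hcard : ({-3, -2, -1, 0, 1, 2} : Finset ℝ).card = 6 := by norm_num
      rw [hcard]
      have h5 : (R - Q).natDegree ≤ 5 := natDegree_le_iff_degree_le.mpr (by exact_mod_cast hle)
      omega
  exact sub_eq_zero.mp hsub
end
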